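/- arXiv:1808.09631 — 6 statements merged into one kernel-verified Lean document; each statement's English description precedes it below -/
import Mathlib

section
/- Let a < b be real numbers and let f ∈ C²([a,b]×[a,b]). Then for every x ∈ [a,b) all the Hadamard finite part integrals below exist, and the function x ↦ p.f.∫_x^b f(x,t)/(t−x) dt is differentiable on [a,b) with d/dx ( p.f.∫_x^b f(x,t)/(t−x) dt ) = p.f.∫_x^b f(x,t)/(t−x)² dt + p.f.∫_x^b (∂f/∂x)(x,t)/(t−x) dt − (∂f/∂t)(x,x). -/
/-!
The divided difference `G(y,t) = ∫₀¹ ∂ₜf(y, y + r(t - y)) dr` equals `(f(y,t) - f(y,y)) / (t - y)`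
off the diagonal and is Lipschitz on the square because `∂ₜf` is. Removing the pole `f(x,x)/(t - x)`
turns the finite part into the ordinary integral `H(x) = ∫ₓᵇ G(x,t) dt + f(x,x) log(b - x)`; the
other two finite parts are likewise ordinary integrals of bounded difference quotients plus
explicit `log(b - x)` and `1/(b - x)` terms. The Lipschitz bound lets us differentiate `H` under the
integral sign by dominated convergence, where
`∂ᵧG(x,t) = (∂ₓf(x,t) - ∂ₓf(x,x)) / (t - x) + (G(x,t) - G(x,x)) / (t - x)`, while the moving lower
limit contributes `-G(x,x) = -∂ₜf(x,x)`. Collecting terms gives the formula.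
-/

open MeasureTheory Filter Set
open scoped Topology

noncomputable section

/-- Hadamard finite part of order 1 with upper limit `b`:
`p.f.∫_x^b g(t)/(t−x) dt = L` means
`lim_{ε→0⁺} ( ∫_{x+ε}^b g(t)/(t−x) dt + g(x)·log ε ) = L`. -/
def HasPF1Upper (g : ℝ → ℝ) (x b L : ℝ) : Prop :=
  Tendsto (fun ε : ℝ => (∫ t in (x + ε)..b, g t / (t - x)) + g x * Real.log ε)
    (𝓝[>] (0 : ℝ)) (𝓝 L)

/-- Hadamard finite part of order 2 with upper limit `b`, where `d` is the right
derivative `g'(x⁺)`: `p.f.∫_x^b g(t)/(t−x)² dt = L` means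
`lim_{ε→0⁺} ( ∫_{x+ε}^b g(t)/(t−x)² dt + d·log ε − g(x)/ε ) = L`. -/
def HasPF2Upper (g : ℝ → ℝ) (d x b L : ℝ) : Prop :=
  Tendsto (fun ε : ℝ => (∫ t in (x + ε)..b, g t / (t - x) ^ 2) + d * Real.log ε - g x / ε)
    (𝓝[>] (0 : ℝ)) (𝓝 L)

open Function intervalIntegral
open scoped NNReal Interval

section FinitePart

variable {g q : ℝ → ℝ} {x b : ℝ}

lemma integral_inv_sub {c : ℝ} (hc : x < c) (hb : x < b) :
    ∫ t in c..b, (t - x)⁻¹ = Real.log (b - x) - Real.log (c - x) := by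
  rw [integral_comp_sub_right (fun u => u⁻¹) x,
    integral_inv (notMem_uIcc_of_lt (by linarith) (by linarith)),
    Real.log_div (by linarith) (by linarith)]

lemma integral_inv_sub_sq {c : ℝ} (hc : x < c) (hb : x < b) :
    ∫ t in c..b, ((t - x) ^ 2)⁻¹ = (c - x)⁻¹ - (b - x)⁻¹ := by
  have hpos : ∀ t ∈ uIcc c b, t - x ≠ 0 := fun t ht =>
    (sub_pos.2 (lt_of_lt_of_le (lt_min hc hb) ht.1)).ne'
  rw [integral_eq_sub_of_hasDerivAt (f := fun t => -(t - x)⁻¹)]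
  · ring
  · intro t ht
    have h := (((hasDerivAt_id t).sub_const x).inv (hpos t ht)).neg
    simp only [id, neg_div, neg_neg, one_div] at h
    exact h
  · exact (ContinuousOn.inv₀ (by fun_prop) fun t ht =>
      pow_ne_zero 2 (hpos t ht)).intervalIntegrable

lemma tendsto_integral_add_nhdsGT (hxb : x < b) (hq : IntervalIntegrable q volume x b) :
    Tendsto (fun ε => ∫ t in (x + ε)..b, q t) (𝓝[>] 0) (𝓝 (∫ t in x..b, q t)) := by
  have hcont := continuousOn_primitive_interval_left (by rwa [intervalIntegrable_iff'] at hq) x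
    left_mem_uIcc
  refine hcont.tendsto.comp (tendsto_nhdsWithin_iff.2 ⟨?_, ?_⟩)
  · exact ((continuous_const_add x).tendsto' 0 x (add_zero x)).mono_left nhdsWithin_le_nhds
  · filter_upwards [Ioo_mem_nhdsGT (sub_pos.2 hxb)] with ε ⟨hε, hεb⟩
    rw [uIcc_of_le hxb.le]
    constructor <;> linarith

lemma uIcc_add_subset_Ioc {ε : ℝ} (hε : 0 < ε) (hεb : ε < b - x) : uIcc (x + ε) b ⊆ Ioc x b := by
  rw [uIcc_of_le (by linarith)]
  exact Icc_subset_Ioc_iff (by linarith) |>.2 ⟨by linarith, le_rfl⟩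

lemma hasPF1Upper_of_eqOn (hxb : x < b) (hq : IntervalIntegrable q volume x b)
    (heq : EqOn q (slope g x) (Ioc x b)) :
    HasPF1Upper g x b ((∫ t in x..b, q t) + g x * Real.log (b - x)) := by
  refine ((tendsto_integral_add_nhdsGT hxb hq).add_const _).congr' ?_
  filter_upwards [Ioo_mem_nhdsGT (sub_pos.2 hxb)] with ε ⟨hε, hεb⟩
  have hsub := uIcc_add_subset_Ioc hε hεb
  have hne : ∀ t ∈ uIcc (x + ε) b, t - x ≠ 0 := fun t ht => (sub_pos.2 (hsub ht).1).ne'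
  have hq' : IntervalIntegrable q volume (x + ε) b :=
    hq.mono_set (by simpa [uIcc_of_le hxb.le] using hsub.trans Ioc_subset_Icc_self)
  have hsplit : ∫ t in (x + ε)..b, g t / (t - x) = ∫ t in (x + ε)..b, q t + g x * (t - x)⁻¹ := by
    refine integral_congr fun t ht => ?_
    simp only [heq (hsub ht), slope_def_field]
    field_simp [hne t ht]
    ring
  have hpole : IntervalIntegrable (fun t => g x * (t - x)⁻¹) volume (x + ε) b :=
    (continuousOn_const.mul (ContinuousOn.inv₀ (by fun_prop) hne)).intervalIntegrable
  rw [hsplit, integral_add hq' hpole, intervalIntegral.integral_const_mul,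
    integral_inv_sub (by linarith) hxb, add_sub_cancel_left]
  ring

lemma hasPF2Upper_of_eqOn {d : ℝ} (hxb : x < b) (hq : IntervalIntegrable q volume x b)
    (heq : EqOn q (fun t => (g t - g x - d * (t - x)) / (t - x) ^ 2) (Ioc x b)) :
    HasPF2Upper g d x b ((∫ t in x..b, q t) + d * Real.log (b - x) - g x / (b - x)) := by
  refine (((tendsto_integral_add_nhdsGT hxb hq).add_const _).sub_const _).congr' ?_
  filter_upwards [Ioo_mem_nhdsGT (sub_pos.2 hxb)] with ε ⟨hε, hεb⟩
  have hsub := uIcc_add_subset_Ioc hε hεb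
  have hne : ∀ t ∈ uIcc (x + ε) b, t - x ≠ 0 := fun t ht => (sub_pos.2 (hsub ht).1).ne'
  have hq' : IntervalIntegrable q volume (x + ε) b :=
    hq.mono_set (by simpa [uIcc_of_le hxb.le] using hsub.trans Ioc_subset_Icc_self)
  have hsplit : ∫ t in (x + ε)..b, g t / (t - x) ^ 2
      = ∫ t in (x + ε)..b, q t + (d * (t - x)⁻¹ + g x * ((t - x) ^ 2)⁻¹) := by
    refine integral_congr fun t ht => ?_
    simp only [heq (hsub ht)]
    field_simp [hne t ht]
    ring
  have hpole : IntervalIntegrable (fun t => d * (t - x)⁻¹) volume (x + ε) b :=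
    (continuousOn_const.mul (ContinuousOn.inv₀ (by fun_prop) hne)).intervalIntegrable
  have hpole₂ : IntervalIntegrable (fun t => g x * ((t - x) ^ 2)⁻¹) volume (x + ε) b :=
    (continuousOn_const.mul (ContinuousOn.inv₀ (by fun_prop) fun t ht =>
      pow_ne_zero 2 (hne t ht))).intervalIntegrable
  rw [hsplit, integral_add hq' (hpole.add hpole₂), integral_add hpole hpole₂,
    intervalIntegral.integral_const_mul,
    intervalIntegral.integral_const_mul, integral_inv_sub (by linarith) hxb,
    integral_inv_sub_sq (by linarith) hxb, add_sub_cancel_left]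
  ring

lemma LipschitzOnWith.abs_slope_le {s : Set ℝ} {M : ℝ≥0} {y : ℝ} (hg : LipschitzOnWith M g s)
    (hx : x ∈ s) (hy : y ∈ s) : |slope g x y| ≤ M := by
  rcases eq_or_ne y x with rfl | hyx
  · simp
  rw [slope_def_field, abs_div, div_le_iff₀ (abs_pos.2 (sub_ne_zero.2 hyx))]
  simpa [Real.dist_eq] using hg.dist_le_mul y hy x hx

lemma intervalIntegrable_slope {M : ℝ≥0} (hxb : x ≤ b) (hg : LipschitzOnWith M g (Icc x b)) :
    IntervalIntegrable (slope g x) volume x b := by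
  rw [intervalIntegrable_iff_integrableOn_Ioc_of_le hxb]
  have hcont : ContinuousOn (slope g x) (Ioc x b) := by
    refine ContinuousOn.congr (f := fun t => (g t - g x) / (t - x)) ?_ fun t _ =>
      slope_def_field g x t
    exact ((hg.continuousOn.mono Ioc_subset_Icc_self).sub continuousOn_const).div (by fun_prop)
      fun t ht => (sub_pos.2 ht.1).ne'
  refine (integrable_const (M : ℝ)).mono' (hcont.aestronglyMeasurable measurableSet_Ioc) ?_
  refine (ae_restrict_iff' measurableSet_Ioc).2 (Eventually.of_forall fun t ht => ?_)
  exact hg.abs_slope_le (left_mem_Icc.2 hxb) (Ioc_subset_Icc_self ht)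

end FinitePart

section LipschitzSlice

variable {α β γ : Type*} [PseudoEMetricSpace α] [PseudoEMetricSpace β] [PseudoEMetricSpace γ]
  {φ : α → β → γ} {s : Set α} {t : Set β} {K : ℝ≥0}

lemma LipschitzOnWith.slice_fst (h : LipschitzOnWith K (uncurry φ) (s ×ˢ t)) {y : β} (hy : y ∈ t) :
    LipschitzOnWith K (φ · y) s := by
  rw [← mul_one K]
  exact h.comp (LipschitzWith.prodMk_right y).lipschitzOnWith fun x hx => ⟨hx, hy⟩

lemma LipschitzOnWith.slice_snd (h : LipschitzOnWith K (uncurry φ) (s ×ˢ t)) {x : α} (hx : x ∈ s) :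
    LipschitzOnWith K (φ x) t := by
  rw [← mul_one K]
  exact h.comp (LipschitzWith.prodMk_left x).lipschitzOnWith fun y hy => ⟨hx, hy⟩

end LipschitzSlice

section ParametricIntegral

variable {G : ℝ → ℝ → ℝ} {s : Set ℝ} {M : ℝ≥0} {x b : ℝ}

lemma hasDerivWithinAt_intervalIntegral_of_lipschitzOnWith {G' : ℝ → ℝ} (hx : x ∈ s)
    (hint : ∀ y ∈ s, IntervalIntegrable (G y) volume x b)
    (hlip : ∀ t ∈ Ι x b, LipschitzOnWith M (G · t) s)
    (hderiv : ∀ t ∈ Ι x b, HasDerivWithinAt (G · t) (G' t) s x) :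
    HasDerivWithinAt (fun y => ∫ t in x..b, G y t) (∫ t in x..b, G' t) s x := by
  rw [hasDerivWithinAt_iff_tendsto_slope]
  have hslope : ∀ y ∈ s,
      slope (fun y => ∫ t in x..b, G y t) x y = ∫ t in x..b, slope (G · t) x y := by
    intro y hy
    simp only [slope_def_field]
    rw [← integral_sub (hint y hy) (hint x hx), intervalIntegral.integral_div]
  refine (tendsto_integral_filter_of_dominated_convergence (F := fun y t => slope (G · t) x y)
    (fun _ => (M : ℝ)) ?_ ?_ intervalIntegrable_const ?_).congr' ?_
  · filter_upwards [self_mem_nhdsWithin] with y hy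
    exact ((hint y hy.1).sub (hint x hx)).def'.aestronglyMeasurable.const_smul (y - x)⁻¹
  · filter_upwards [self_mem_nhdsWithin] with y hy
    exact Eventually.of_forall fun t ht => (hlip t ht).abs_slope_le hx hy.1
  · exact Eventually.of_forall fun t ht => hasDerivWithinAt_iff_tendsto_slope.1 (hderiv t ht)
  · filter_upwards [self_mem_nhdsWithin] with y hy
    exact (hslope y hy.1).symm

lemma hasDerivWithinAt_intervalIntegral_diag (hs : s.OrdConnected) (hx : x ∈ s)
    (hlip : LipschitzOnWith M (uncurry G) (s ×ˢ s)) :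
    HasDerivWithinAt (fun y => ∫ t in x..y, G y t) (G x x) s x := by
  rw [hasDerivWithinAt_iff_tendsto_slope, tendsto_iff_norm_sub_tendsto_zero]
  have hlim : Tendsto (fun y => M * |y - x|) (𝓝[s \ {x}] x) (𝓝 0) :=
    ((continuous_const.mul (continuous_abs.comp (continuous_sub_right x))).tendsto' x 0
      (by simp)).mono_left nhdsWithin_le_nhds
  refine squeeze_zero' (Eventually.of_forall fun _ => norm_nonneg _) ?_ hlim
  filter_upwards [self_mem_nhdsWithin] with y ⟨hy, hyx⟩
  have hxy := hs.uIcc_subset hx hy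
  have hbound : ∀ t ∈ Ι x y, ‖G y t - G x x‖ ≤ M * |y - x| := by
    intro t ht
    have ht' := uIoc_subset_uIcc ht
    calc ‖G y t - G x x‖ ≤ M * dist (y, t) (x, x) := by
          simpa [← Real.dist_eq] using hlip.dist_le_mul (y, t) ⟨hy, hxy ht'⟩ (x, x) ⟨hx, hx⟩
      _ ≤ M * |y - x| := by
          gcongr
          simpa [Prod.dist_eq, Real.dist_eq] using abs_sub_left_of_mem_uIcc ht'
  have hslope : slope (fun y => ∫ t in x..y, G y t) x y - G x x
      = (y - x)⁻¹ * ∫ t in x..y, (G y t - G x x) := by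
    rw [slope_def_field, integral_same, integral_sub
      ((hlip.slice_snd hy).continuousOn.mono hxy).intervalIntegrable intervalIntegrable_const,
      intervalIntegral.integral_const, smul_eq_mul]
    field_simp [sub_ne_zero.2 hyx]
    ring
  rw [hslope, norm_mul, norm_inv, Real.norm_eq_abs]
  calc |y - x|⁻¹ * ‖∫ t in x..y, (G y t - G x x)‖ ≤ |y - x|⁻¹ * (M * |y - x| * |y - x|) := by
        gcongr
        exact norm_integral_le_of_norm_le_const hbound
    _ = M * |y - x| := by field_simp [abs_pos.2 (sub_ne_zero.2 hyx)]

lemma hasDerivWithinAt_intervalIntegral_lower {G' : ℝ → ℝ} (hs : s.OrdConnected) (hx : x ∈ s)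
    (hb : b ∈ s) (hlip : LipschitzOnWith M (uncurry G) (s ×ˢ s))
    (hderiv : ∀ t ∈ Ι x b, HasDerivWithinAt (G · t) (G' t) s x) :
    HasDerivWithinAt (fun y => ∫ t in y..b, G y t) ((∫ t in x..b, G' t) - G x x) s x := by
  have hint : ∀ y ∈ s, ∀ c ∈ s, IntervalIntegrable (G y) volume x c := fun y hy c hc =>
    ((hlip.slice_snd hy).continuousOn.mono (hs.uIcc_subset hx hc)).intervalIntegrable
  have hfixed := hasDerivWithinAt_intervalIntegral_of_lipschitzOnWith hx
    (fun y hy => hint y hy b hb)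
    (fun t ht => hlip.slice_fst (hs.uIcc_subset hx hb (uIoc_subset_uIcc ht))) hderiv
  refine (hfixed.sub (hasDerivWithinAt_intervalIntegral_diag hs hx hlip)).congr_of_mem ?_ hx
  intro y hy
  exact (integral_interval_sub_left (hint y hy b hb) (hint y hy y hy)).symm

end ParametricIntegral

def divDiff (φ : ℝ × ℝ → ℝ) (y t : ℝ) : ℝ :=
  ∫ r in (0 : ℝ)..1, φ (y, y + r * (t - y))

section DivDiff

variable {φ : ℝ × ℝ → ℝ} {s : Set ℝ}

@[simp]
lemma divDiff_self (y : ℝ) : divDiff φ y y = φ (y, y) := by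
  simp [divDiff]

lemma dist_segment_point_le (p q : ℝ × ℝ) {r : ℝ} (hr : r ∈ Icc (0 : ℝ) 1) :
    dist (p.1, p.1 + r * (p.2 - p.1)) (q.1, q.1 + r * (q.2 - q.1)) ≤ dist p q := by
  simp only [Prod.dist_eq, Real.dist_eq]
  refine max_le (le_max_left _ _) ?_
  calc |p.1 + r * (p.2 - p.1) - (q.1 + r * (q.2 - q.1))|
      = |(1 - r) * (p.1 - q.1) + r * (p.2 - q.2)| := by ring_nf
    _ ≤ (1 - r) * |p.1 - q.1| + r * |p.2 - q.2| := by
        refine (abs_add_le _ _).trans_eq ?_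
        rw [abs_mul, abs_mul, abs_of_nonneg (by linarith [hr.2]), abs_of_nonneg hr.1]
    _ ≤ (1 - r) * max |p.1 - q.1| |p.2 - q.2| + r * max |p.1 - q.1| |p.2 - q.2| := by
        gcongr
        · linarith [hr.2]
        · exact le_max_left _ _
        · exact hr.1
        · exact le_max_right _ _
    _ = max |p.1 - q.1| |p.2 - q.2| := by ring

lemma lipschitzOnWith_divDiff {M : ℝ≥0} (hs : Convex ℝ s) (hφ : LipschitzOnWith M φ (s ×ˢ s)) :
    LipschitzOnWith M (uncurry (divDiff φ)) (s ×ˢ s) := by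
  have hmem : ∀ p ∈ s ×ˢ s, ∀ r ∈ uIcc (0 : ℝ) 1, (p.1, p.1 + r * (p.2 - p.1)) ∈ s ×ˢ s :=
    fun p hp r hr => ⟨hp.1, by
      simpa [smul_eq_mul] using
        hs.add_smul_sub_mem hp.1 hp.2 (by rwa [uIcc_of_le zero_le_one] at hr)⟩
  have hint : ∀ p ∈ s ×ˢ s,
      IntervalIntegrable (fun r => φ (p.1, p.1 + r * (p.2 - p.1))) volume 0 1 := fun p hp =>
    (hφ.continuousOn.comp (by fun_prop) (hmem p hp)).intervalIntegrable
  refine LipschitzOnWith.of_dist_le_mul fun p hp q hq => ?_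
  have hbound : ∀ r ∈ Ι (0 : ℝ) 1,
      ‖φ (p.1, p.1 + r * (p.2 - p.1)) - φ (q.1, q.1 + r * (q.2 - q.1))‖ ≤ M * dist p q := by
    intro r hr
    have hr' : r ∈ uIcc (0 : ℝ) 1 := uIoc_subset_uIcc hr
    rw [← dist_eq_norm]
    refine (hφ.dist_le_mul _ (hmem p hp r hr') _ (hmem q hq r hr')).trans ?_
    gcongr
    exact dist_segment_point_le p q (by rwa [uIcc_of_le zero_le_one] at hr')
  calc dist (uncurry (divDiff φ) p) (uncurry (divDiff φ) q)
      = ‖∫ r in (0 : ℝ)..1,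
          (φ (p.1, p.1 + r * (p.2 - p.1)) - φ (q.1, q.1 + r * (q.2 - q.1)))‖ := by
        rw [integral_sub (hint p hp) (hint q hq), dist_eq_norm]
        rfl
    _ ≤ M * dist p q * |1 - 0| := norm_integral_le_of_norm_le_const hbound
    _ = M * dist p q := by simp

lemma divDiff_eq_slope {g : ℝ → ℝ} {y t : ℝ} (hs : s.OrdConnected) (hy : y ∈ s) (ht : t ∈ s)
    (hty : t ≠ y) (hg : ∀ u ∈ s, HasDerivWithinAt g (φ (y, u)) s u)
    (hφ : ContinuousOn (fun u => φ (y, u)) s) :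
    divDiff φ y t = slope g y t := by
  have hsub := hs.uIcc_subset hy ht
  have hftc : ∫ u in y..t, φ (y, u) = g t - g y := by
    refine integral_eq_sub_of_hasDeriv_right
      (fun u hu => (hg u (hsub hu)).continuousWithinAt.mono hsub) (fun u hu => ?_)
      ((hφ.mono hsub).intervalIntegrable)
    exact ((hg u (hsub (Ioo_subset_Icc_self hu))).hasDerivAt
      (mem_of_superset (Ioo_mem_nhds hu.1 hu.2)
        (Ioo_subset_Icc_self.trans hsub))).hasDerivWithinAt
  have hcov := integral_comp_mul_add (fun u => φ (y, u)) (sub_ne_zero.2 hty) y (a := 0) (b := 1)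
  simp only [mul_zero, zero_add, mul_one, sub_add_cancel] at hcov
  rw [slope_def_field, divDiff, div_eq_inv_mul, ← hftc, ← smul_eq_mul, ← hcov]
  congr 1 with r
  ring_nf

end DivDiff

def partialFst (f : ℝ → ℝ → ℝ) (s : Set ℝ) (x t : ℝ) : ℝ :=
  derivWithin (fun y => f y t) s x

def partialSnd (f : ℝ → ℝ → ℝ) (s : Set ℝ) (x t : ℝ) : ℝ :=
  derivWithin (f x) s t

section Partials

variable {f : ℝ → ℝ → ℝ} {s : Set ℝ} {x t : ℝ}

lemma hasDerivWithinAt_fderivWithin_fst (hf : DifferentiableOn ℝ (uncurry f) (s ×ˢ s))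
    (hx : x ∈ s) (ht : t ∈ s) :
    HasDerivWithinAt (fun y => f y t) (fderivWithin ℝ (uncurry f) (s ×ˢ s) (x, t) (1, 0)) s x :=
  (hf (x, t) ⟨hx, ht⟩).hasFDerivWithinAt.comp_hasDerivWithinAt (f := fun y => (y, t)) x
    ((hasDerivWithinAt_id x s).prodMk (hasDerivWithinAt_const x s t)) fun _ hy => ⟨hy, ht⟩

lemma hasDerivWithinAt_fderivWithin_snd (hf : DifferentiableOn ℝ (uncurry f) (s ×ˢ s))
    (hx : x ∈ s) (ht : t ∈ s) :
    HasDerivWithinAt (f x) (fderivWithin ℝ (uncurry f) (s ×ˢ s) (x, t) (0, 1)) s t :=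
  (hf (x, t) ⟨hx, ht⟩).hasFDerivWithinAt.comp_hasDerivWithinAt (f := fun u => (x, u)) t
    ((hasDerivWithinAt_const t s x).prodMk (hasDerivWithinAt_id t s)) fun _ hu => ⟨hx, hu⟩

lemma partialFst_eq_fderivWithin (hs : UniqueDiffOn ℝ s)
    (hf : DifferentiableOn ℝ (uncurry f) (s ×ˢ s)) (hx : x ∈ s) (ht : t ∈ s) :
    partialFst f s x t = fderivWithin ℝ (uncurry f) (s ×ˢ s) (x, t) (1, 0) :=
  (hasDerivWithinAt_fderivWithin_fst hf hx ht).derivWithin (hs x hx)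

lemma partialSnd_eq_fderivWithin (hs : UniqueDiffOn ℝ s)
    (hf : DifferentiableOn ℝ (uncurry f) (s ×ˢ s)) (hx : x ∈ s) (ht : t ∈ s) :
    partialSnd f s x t = fderivWithin ℝ (uncurry f) (s ×ˢ s) (x, t) (0, 1) :=
  (hasDerivWithinAt_fderivWithin_snd hf hx ht).derivWithin (hs t ht)

lemma hasDerivWithinAt_partialFst (hf : DifferentiableOn ℝ (uncurry f) (s ×ˢ s))
    (hx : x ∈ s) (ht : t ∈ s) :
    HasDerivWithinAt (fun y => f y t) (partialFst f s x t) s x :=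
  (hasDerivWithinAt_fderivWithin_fst hf hx ht).differentiableWithinAt.hasDerivWithinAt

lemma hasDerivWithinAt_partialSnd (hf : DifferentiableOn ℝ (uncurry f) (s ×ˢ s))
    (hx : x ∈ s) (ht : t ∈ s) :
    HasDerivWithinAt (f x) (partialSnd f s x t) s t :=
  (hasDerivWithinAt_fderivWithin_snd hf hx ht).differentiableWithinAt.hasDerivWithinAt

lemma hasDerivWithinAt_diag (hs : UniqueDiffOn ℝ s) (hf : DifferentiableOn ℝ (uncurry f) (s ×ˢ s))
    (hx : x ∈ s) :
    HasDerivWithinAt (fun y => f y y) (partialFst f s x x + partialSnd f s x x) s x := by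
  have h := (hf (x, x) ⟨hx, hx⟩).hasFDerivWithinAt.comp_hasDerivWithinAt
    (f := fun y => (y, y)) x ((hasDerivWithinAt_id x s).prodMk (hasDerivWithinAt_id x s))
    fun _ hy => ⟨hy, hy⟩
  rwa [show ((1 : ℝ), (1 : ℝ)) = (1, 0) + (0, 1) by simp, map_add,
    ← partialFst_eq_fderivWithin hs hf hx hx, ← partialSnd_eq_fderivWithin hs hf hx hx] at h

lemma contDiffOn_partialFst {n : WithTop ℕ∞} (hs : UniqueDiffOn ℝ s)
    (hf : ContDiffOn ℝ (n + 1) (uncurry f) (s ×ˢ s)) :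
    ContDiffOn ℝ n (uncurry (partialFst f s)) (s ×ˢ s) :=
  ((hf.fderivWithin (hs.prod hs) le_rfl).clm_apply contDiffOn_const).congr fun p hp =>
    partialFst_eq_fderivWithin hs (hf.differentiableOn (by simp)) hp.1 hp.2

lemma contDiffOn_partialSnd {n : WithTop ℕ∞} (hs : UniqueDiffOn ℝ s)
    (hf : ContDiffOn ℝ (n + 1) (uncurry f) (s ×ˢ s)) :
    ContDiffOn ℝ n (uncurry (partialSnd f s)) (s ×ˢ s) :=
  ((hf.fderivWithin (hs.prod hs) le_rfl).clm_apply contDiffOn_const).congr fun p hp =>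
    partialSnd_eq_fderivWithin hs (hf.differentiableOn (by simp)) hp.1 hp.2

end Partials

section DivDiffPartialSnd

variable {f : ℝ → ℝ → ℝ} {s : Set ℝ} {x t : ℝ}

lemma divDiff_partialSnd_eq_slope (hs : s.OrdConnected) (hu : UniqueDiffOn ℝ s)
    (hf : ContDiffOn ℝ 1 (uncurry f) (s ×ˢ s)) (hx : x ∈ s) (ht : t ∈ s) (htx : t ≠ x) :
    divDiff (uncurry (partialSnd f s)) x t = slope (f x) x t :=
  divDiff_eq_slope hs hx ht htx
    (fun _ hu' => hasDerivWithinAt_partialSnd (hf.differentiableOn one_ne_zero) hx hu')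
    ((contDiffOn_partialSnd (n := 0) hu (by simpa using hf)).continuousOn.comp (by fun_prop)
      fun _ hu' => ⟨hx, hu'⟩)

lemma slope_divDiff_partialSnd (hs : s.OrdConnected) (hu : UniqueDiffOn ℝ s)
    (hf : ContDiffOn ℝ 1 (uncurry f) (s ×ˢ s)) (hx : x ∈ s) (ht : t ∈ s) (htx : t ≠ x) :
    slope (divDiff (uncurry (partialSnd f s)) x) x t
      = (f x t - f x x - partialSnd f s x x * (t - x)) / (t - x) ^ 2 := by
  rw [slope_def_field, divDiff_partialSnd_eq_slope hs hu hf hx ht htx, divDiff_self,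
    uncurry_apply_pair, slope_def_field]
  have : t - x ≠ 0 := sub_ne_zero.2 htx
  field_simp

lemma hasDerivWithinAt_divDiff_partialSnd (hs : s.OrdConnected) (hu : UniqueDiffOn ℝ s)
    (hf : ContDiffOn ℝ 1 (uncurry f) (s ×ˢ s)) (hx : x ∈ s) (ht : t ∈ s) (hxt : x ≠ t) :
    HasDerivWithinAt (divDiff (uncurry (partialSnd f s)) · t)
      (slope (partialFst f s x) x t + slope (divDiff (uncurry (partialSnd f s)) x) x t) s x := by
  have hd := hf.differentiableOn one_ne_zero
  have hquot := ((hasDerivWithinAt_partialFst hd hx ht).sub (hasDerivWithinAt_diag hu hd hx)).mul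
    (((hasDerivWithinAt_id x s).const_sub t).inv (sub_ne_zero.2 hxt.symm))
  have hrepr : ∀ y ∈ s, y ≠ t →
      divDiff (uncurry (partialSnd f s)) y t = (f y t - f y y) * (t - y)⁻¹ := fun y hy hyt => by
    rw [divDiff_partialSnd_eq_slope hs hu hf hy ht hyt.symm, slope_def_field, div_eq_mul_inv]
  refine (hquot.congr_of_eventuallyEq ?_ (hrepr x hx hxt)).congr_deriv ?_
  · filter_upwards [self_mem_nhdsWithin, nhdsWithin_le_nhds (isOpen_ne.mem_nhds hxt)]
      with y hy hyt using hrepr y hy hyt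
  · rw [slope_divDiff_partialSnd hs hu hf hx ht hxt.symm, slope_def_field]
    have : t - x ≠ 0 := sub_ne_zero.2 hxt.symm
    simp only [id, Pi.inv_apply, Pi.sub_apply]
    field_simp
    ring

end DivDiffPartialSnd

/-- for `f ∈ C²([a,b]×[a,b])` all Hadamard finite parts below exist and
`x ↦ p.f.∫_x^b f(x,t)/(t−x) dt` is differentiable on `[a,b)` with
derivative `p.f.∫_x^b f(x,t)/(t−x)² dt + p.f.∫_x^b (∂f/∂x)(x,t)/(t−x) dt − (∂f/∂t)(x,x)`. -/
theorem stmt0 (a b : ℝ) (hab : a < b) (f : ℝ → ℝ → ℝ)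
    (hf : ContDiffOn ℝ 2 (fun p : ℝ × ℝ => f p.1 p.2) (Set.Icc a b ×ˢ Set.Icc a b)) :
    ∃ H : ℝ → ℝ,
      ∀ x ∈ Set.Ico a b,
        HasPF1Upper (fun t => f x t) x b (H x) ∧
        ∃ L₂ L₁ : ℝ,
          HasPF2Upper (fun t => f x t)
            (derivWithin (fun t => f x t) (Set.Icc a b) x) x b L₂ ∧
          HasPF1Upper (fun t => derivWithin (fun y => f y t) (Set.Icc a b) x) x b L₁ ∧
          HasDerivWithinAt H
            (L₂ + L₁ - derivWithin (fun t => f x t) (Set.Icc a b) x) (Set.Ico a b) x := by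
  set I := Icc a b
  have hu : UniqueDiffOn ℝ I := uniqueDiffOn_Icc hab
  have hconv : Convex ℝ (I ×ˢ I) := (convex_Icc a b).prod (convex_Icc a b)
  have hcomp : IsCompact (I ×ˢ I) := isCompact_Icc.prod isCompact_Icc
  have hf₁ : ContDiffOn ℝ 1 (uncurry f) (I ×ˢ I) := hf.of_le one_le_two
  obtain ⟨M₁, hM₁⟩ := (contDiffOn_partialFst (n := 1) hu hf).exists_lipschitzOnWith one_ne_zero
    hconv hcomp
  obtain ⟨M₂, hM₂⟩ := (contDiffOn_partialSnd (n := 1) hu hf).exists_lipschitzOnWith one_ne_zero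
    hconv hcomp
  set G := divDiff (uncurry (partialSnd f I))
  have hG : LipschitzOnWith M₂ (uncurry G) (I ×ˢ I) := lipschitzOnWith_divDiff (convex_Icc a b) hM₂
  refine ⟨fun x => (∫ t in x..b, G x t) + f x x * Real.log (b - x), fun x hx => ?_⟩
  have hxI : x ∈ I := Ico_subset_Icc_self hx
  have hxb : Icc x b ⊆ I := Icc_subset_Icc_left hx.1
  have hIoc : ∀ t ∈ Ioc x b, t ∈ I := fun t ht => hxb (Ioc_subset_Icc_self ht)
  have hGx : IntervalIntegrable (G x) volume x b :=
    ((hG.slice_snd hxI).continuousOn.mono (by rwa [uIcc_of_le hx.2.le])).intervalIntegrable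
  have hQ := intervalIntegrable_slope hx.2.le ((hM₁.slice_snd hxI).mono hxb)
  have hW := intervalIntegrable_slope hx.2.le ((hG.slice_snd hxI).mono hxb)
  refine ⟨hasPF1Upper_of_eqOn hx.2 hGx fun t ht =>
      divDiff_partialSnd_eq_slope ordConnected_Icc hu hf₁ hxI (hIoc t ht) ht.1.ne',
    _, _, hasPF2Upper_of_eqOn hx.2 hW fun t ht =>
      slope_divDiff_partialSnd ordConnected_Icc hu hf₁ hxI (hIoc t ht) ht.1.ne',
    hasPF1Upper_of_eqOn hx.2 hQ (eqOn_refl _ _), ?_⟩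
  have hGderiv : ∀ t ∈ Ι x b, HasDerivWithinAt (G · t)
      (slope (partialFst f I x) x t + slope (G x) x t) I x := fun t ht => by
    rw [uIoc_of_le hx.2.le] at ht
    exact hasDerivWithinAt_divDiff_partialSnd ordConnected_Icc hu hf₁ hxI (hIoc t ht) ht.1.ne
  have hΦ := hasDerivWithinAt_intervalIntegral_lower ordConnected_Icc hxI (right_mem_Icc.2 hab.le)
    hG hGderiv
  have hlog := ((hasDerivWithinAt_diag hu (hf₁.differentiableOn one_ne_zero) hxI).mul
    (((hasDerivWithinAt_id x I).const_sub b).log (sub_ne_zero.2 hx.2.ne')))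
  refine ((hΦ.add hlog).mono Ico_subset_Icc_self).congr_deriv ?_
  rw [integral_add hQ hW, show G x x = partialSnd f I x x from divDiff_self x]
  simp only [partialFst, partialSnd, id]
  ring
end
end

section
/- Let f : Ḡ×I'×I → ℝ be continuous and continuously differentiable with respect to its second (primed) variable E', with ∂f/∂E' continuous on Ḡ×I'×I. Then for every x ∈ Ḡ and E ∈ [E₀,E_m) the Hadamard finite part integral exists and p.f.∫_E^{E_m} f(x,E',E)/(E'−E) dE' = − ∫_E^{E_m} log(E'−E)·(∂f/∂E')(x,E',E) dE' + log(E_m−E)·f(x,E_m,E). -/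
/-!
Integrate by parts on `[E + ε, E_m]` against `log (E' - E)`. The boundary term at `E + ε` is
`-f(E + ε) log ε`, which cancels the finite-part correction `f(E) log ε` up to
`(f(E) - f(E + ε)) log ε = O(ε log ε) → 0`, and since `log (E' - E)` is integrable at `E' = E`
the remaining integral converges to the one over `[E, E_m]`.
-/

open MeasureTheory Filter Set
open scoped Topology

noncomputable section

abbrev E3 : Type := EuclideanSpace ℝ (Fin 3)

open Real

lemma intervalIntegrable_log_sub (x b : ℝ) :
    IntervalIntegrable (fun t => log (t - x)) volume x b := by
  simpa using (intervalIntegral.intervalIntegrable_log' (a := 0) (b := b - x)).comp_sub_right x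

lemma tendsto_const_add_nhdsGT_zero (x : ℝ) : Tendsto (x + ·) (𝓝[>] 0) (𝓝[>] x) :=
  tendsto_nhdsWithin_of_tendsto_nhds_of_eventually_within _
    (((continuous_const_add x).tendsto' 0 x (add_zero x)).mono_left nhdsWithin_le_nhds)
    (eventually_nhdsWithin_of_forall fun _ hε => lt_add_of_pos_right x hε)

lemma tendsto_intervalIntegral_const_add_nhdsGT_zero {φ : ℝ → ℝ} {x b : ℝ} (hxb : x < b)
    (hφ : IntervalIntegrable φ volume x b) :
    Tendsto (fun ε => ∫ t in (x + ε)..b, φ t) (𝓝[>] 0) (𝓝 (∫ t in x..b, φ t)) := by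
  have hcont : ContinuousWithinAt (fun u => ∫ t in u..b, φ t) (Ioi x) x :=
    (intervalIntegral.continuousOn_primitive_interval_left
      ((intervalIntegrable_iff' enorm_ne_top).1 hφ) x left_mem_uIcc).mono_of_mem_nhdsWithin
      (by rw [uIcc_of_le hxb.le]; exact Icc_mem_nhdsGT hxb)
  exact hcont.tendsto.comp (tendsto_const_add_nhdsGT_zero x)

lemma tendsto_sub_mul_log_nhdsGT_zero {g : ℝ → ℝ} {d x : ℝ}
    (hg : HasDerivWithinAt g d (Ioi x) x) :
    Tendsto (fun ε => (g (x + ε) - g x) * log ε) (𝓝[>] 0) (𝓝 0) := by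
  have hslope : Tendsto (fun ε => ε⁻¹ * (g (x + ε) - g x)) (𝓝[>] 0) (𝓝 d) := by
    have h := (hasDerivWithinAt_iff_tendsto_slope' (lt_irrefl x)).1 hg
    exact (h.comp (tendsto_const_add_nhdsGT_zero x)).congr fun ε => by
      simp [slope_def_field, div_eq_inv_mul]
  have hmul_log : Tendsto (fun ε => ε * log ε) (𝓝[>] 0) (𝓝 0) :=
    (continuous_mul_log.tendsto' 0 0 (by simp)).mono_left nhdsWithin_le_nhds
  refine (mul_zero d ▸ hslope.mul hmul_log).congr' ?_
  filter_upwards [self_mem_nhdsWithin] with ε (hε : 0 < ε)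
  field_simp

lemma integral_div_sub_eq_sub_integral_log_mul {g g' : ℝ → ℝ} {x a b : ℝ} (hxa : x < a)
    (hab : a ≤ b) (hg : ∀ t ∈ Icc a b, HasDerivWithinAt g (g' t) (Icc a b) t)
    (hg' : IntervalIntegrable g' volume a b) :
    ∫ t in a..b, g t / (t - x) =
      log (b - x) * g b - log (a - x) * g a - ∫ t in a..b, log (t - x) * g' t := by
  have hpos : ∀ t ∈ Icc a b, 0 < t - x := fun t ht => sub_pos.2 (hxa.trans_le ht.1)
  have hlog : ∀ t ∈ Icc a b, HasDerivAt (fun s => log (s - x)) (t - x)⁻¹ t := fun t ht => by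
    simpa using ((hasDerivAt_id t).sub_const x).log (hpos t ht).ne'
  have hinv : IntervalIntegrable (fun t => (t - x)⁻¹) volume a b :=
    ((continuousOn_id.sub continuousOn_const).inv₀ fun t ht => (hpos t ht).ne')
      |>.intervalIntegrable_of_Icc hab
  have := intervalIntegral.integral_mul_deriv_eq_deriv_mul_of_hasDerivWithinAt
    (u := g) (v := fun s => log (s - x)) (by rwa [uIcc_of_le hab])
    (by rw [uIcc_of_le hab]; exact fun t ht => (hlog t ht).hasDerivWithinAt) hg' hinv
  simp only [div_eq_mul_inv, this, mul_comm]

theorem hasPF1Upper_of_hasDerivWithinAt {g g' : ℝ → ℝ} {x b : ℝ} (hxb : x < b)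
    (hg : ∀ t ∈ Icc x b, HasDerivWithinAt g (g' t) (Icc x b) t)
    (hg' : ContinuousOn g' (Icc x b)) :
    HasPF1Upper g x b ((-∫ t in x..b, log (t - x) * g' t) + log (b - x) * g b) := by
  have hint : IntervalIntegrable (fun t => log (t - x) * g' t) volume x b :=
    (intervalIntegrable_log_sub x b).mul_continuousOn (by rwa [uIcc_of_le hxb.le])
  have hslope : HasDerivWithinAt g (g' x) (Ioi x) x :=
    hasDerivWithinAt_Ioi_iff_Ici.2 <|
      (hg x (left_mem_Icc.2 hxb.le)).mono_of_mem_nhdsWithin (Icc_mem_nhdsGE hxb)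
  have hlim := ((tendsto_intervalIntegral_const_add_nhdsGT_zero hxb hint).neg.add
    (tendsto_sub_mul_log_nhdsGT_zero hslope).neg).add_const (log (b - x) * g b)
  rw [neg_zero, add_zero] at hlim
  refine hlim.congr' ?_
  filter_upwards [Ioo_mem_nhdsGT (sub_pos.2 hxb)] with ε hε
  have hsub : Icc (x + ε) b ⊆ Icc x b := Icc_subset_Icc_left (by linarith [hε.1])
  rw [integral_div_sub_eq_sub_integral_log_mul (by linarith [hε.1]) (by linarith [hε.2])
    (fun t ht => (hg t (hsub ht)).mono hsub) ((hg'.mono hsub).intervalIntegrable_of_Icc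
      (by linarith [hε.2])), add_sub_cancel_left]
  ring

theorem stmt3_general (G : Set E3)
    (E₀ Em : ℝ)
    (f f' : E3 → ℝ → ℝ → ℝ)
    (hf' : ContinuousOn (fun p : E3 × ℝ × ℝ => f' p.1 p.2.1 p.2.2)
      (closure G ×ˢ Set.Icc E₀ Em ×ˢ Set.Icc E₀ Em))
    (hderiv : ∀ x ∈ closure G, ∀ E ∈ Set.Icc E₀ Em, ∀ E' ∈ Set.Icc E₀ Em,
      HasDerivWithinAt (fun s => f x s E) (f' x E' E) (Set.Icc E₀ Em) E') :
    ∀ x ∈ closure G, ∀ E ∈ Set.Ico E₀ Em,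
      HasPF1Upper (fun E' => f x E' E) E Em
        ((- ∫ E' in E..Em, Real.log (E' - E) * f' x E' E) + Real.log (Em - E) * f x Em E) := by
  intro x hx E hE
  have hEI : E ∈ Icc E₀ Em := Ico_subset_Icc_self hE
  have hsub : Icc E Em ⊆ Icc E₀ Em := Icc_subset_Icc_left hE.1
  refine hasPF1Upper_of_hasDerivWithinAt hE.2
    (fun t ht => (hderiv x hx E hEI t (hsub ht)).mono hsub) ?_
  exact hf'.comp (f := fun t => (x, t, E)) (by fun_prop) fun t ht => ⟨hx, hsub ht, hEI⟩

/-- partial-integration formula for the first-order Hadamard finite part: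
if `f : Ḡ×I'×I → ℝ` is continuous with continuous partial derivative `f' = ∂f/∂E'`,
then for `x ∈ Ḡ`, `E ∈ [E₀,E_m)`,
`p.f.∫_E^{E_m} f(x,E',E)/(E'−E) dE'
  = −∫_E^{E_m} log(E'−E)·(∂f/∂E')(x,E',E) dE' + log(E_m−E)·f(x,E_m,E)`. -/
theorem stmt3 (G : Set E3) (hGopen : IsOpen G) (hGbdd : Bornology.IsBounded G)
    (E₀ Em : ℝ) (hE₀ : 0 ≤ E₀) (hI : E₀ < Em)
    (f f' : E3 → ℝ → ℝ → ℝ)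
    (hf : ContinuousOn (fun p : E3 × ℝ × ℝ => f p.1 p.2.1 p.2.2)
      (closure G ×ˢ Set.Icc E₀ Em ×ˢ Set.Icc E₀ Em))
    (hf' : ContinuousOn (fun p : E3 × ℝ × ℝ => f' p.1 p.2.1 p.2.2)
      (closure G ×ˢ Set.Icc E₀ Em ×ˢ Set.Icc E₀ Em))
    (hderiv : ∀ x ∈ closure G, ∀ E ∈ Set.Icc E₀ Em, ∀ E' ∈ Set.Icc E₀ Em,
      HasDerivWithinAt (fun s => f x s E) (f' x E' E) (Set.Icc E₀ Em) E') :
    ∀ x ∈ closure G, ∀ E ∈ Set.Ico E₀ Em,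
      HasPF1Upper (fun E' => f x E' E) E Em
        ((- ∫ E' in E..Em, Real.log (E' - E) * f' x E' E) + Real.log (Em - E) * f x Em E) :=
  stmt3_general G E₀ Em f f' hf' hderiv
end
end

section
/- Let α > 0 and let f : Ḡ×I'×I → ℝ be continuous, continuously differentiable in its third variable E, with ∂f/∂E α-Hölder in E uniformly on Ḡ×I'×I (f ∈ C(Ḡ×I', C^{1+α}(I))). Then for every x ∈ Ḡ and E' ∈ (E₀,E_m] both Hadamard finite part integrals below exist and p.f.∫_{E₀}^{E'} f(x,E',E)/(E'−E)² dE = − p.f.∫_{E₀}^{E'} (∂f/∂E)(x,E',E)/(E'−E) dE − (∂f/∂E)(x,E',E') − f(x,E',E₀)/(E'−E₀). -/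
/-!
The Hölder bound `|g t - g x| ≤ C (x - t)^α` makes `(g t - g x) / (x - t)` integrable up to `x`,
and `∫_a^{x-ε} (x - t)⁻¹ dt = log (x - a) - log ε` absorbs the `log ε` counterterm: this gives the
order-one finite part of `g' / (x - t)`. Integrating `g / (t - x)²` by parts on `[a, x - ε]`
produces the order-one truncation of `g'` and the boundary term `g (x - ε) / ε`, which is
`g x / ε - g' x + o(1)`; hence the order-two finite part of `g`.
-/

open MeasureTheory Filter Set
open scoped Topology

noncomputable section

/-- Hadamard finite part of order 1 with lower limit `a`:
`p.f.∫_a^x g(t)/(x−t) dt = L`. -/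
def HasPF1Lower (g : ℝ → ℝ) (a x L : ℝ) : Prop :=
  Tendsto (fun ε : ℝ => (∫ t in a..(x - ε), g t / (x - t)) + g x * Real.log ε)
    (𝓝[>] (0 : ℝ)) (𝓝 L)

/-- Hadamard finite part of order 2 with lower limit `a`, `d` being the left derivative
`g'(x⁻)`: `p.f.∫_a^x g(t)/(t−x)² dt = L` means
`lim_{ε→0⁺} ( ∫_a^{x−ε} g(t)/(t−x)² dt − d·log ε − g(x)/ε ) = L`. -/
def HasPF2Lower (g : ℝ → ℝ) (d a x L : ℝ) : Prop :=
  Tendsto (fun ε : ℝ => (∫ t in a..(x - ε), g t / (t - x) ^ 2) - d * Real.log ε - g x / ε)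
    (𝓝[>] (0 : ℝ)) (𝓝 L)

theorem tendsto_const_sub_nhdsGT_zero (x : ℝ) :
    Tendsto (fun ε => x - ε) (𝓝[>] 0) (𝓝[<] x) := by
  refine tendsto_nhdsWithin_of_tendsto_nhds_of_eventually_within _ ?_ ?_
  · simpa using ((tendsto_const_nhds (x := x)).sub (tendsto_id (x := 𝓝 (0 : ℝ)))).mono_left
      nhdsWithin_le_nhds
  · filter_upwards [self_mem_nhdsWithin] with ε (hε : 0 < ε)
    exact sub_lt_self x hε

theorem tendsto_intervalIntegral_sub_nhdsGT_zero {f : ℝ → ℝ} {a b : ℝ} (hab : a < b)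
    (hf : IntervalIntegrable f volume a b) :
    Tendsto (fun ε => ∫ t in a..b - ε, f t) (𝓝[>] 0) (𝓝 (∫ t in a..b, f t)) := by
  have hprim : ContinuousWithinAt (fun c => ∫ t in a..c, f t) (Iio b) b := by
    refine (intervalIntegral.continuousOn_primitive_interval' hf left_mem_uIcc b
      right_mem_uIcc).mono_of_mem_nhdsWithin ?_
    rw [uIcc_of_le hab.le]
    exact Icc_mem_nhdsLT hab
  exact hprim.tendsto.comp (tendsto_const_sub_nhdsGT_zero b)

theorem integral_inv_const_sub {a x ε : ℝ} (hε : 0 < ε) (hεx : ε ≤ x - a) :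
    ∫ t in a..x - ε, (x - t)⁻¹ = Real.log (x - a) - Real.log ε := by
  rw [intervalIntegral.integral_comp_sub_left (fun s => s⁻¹) x, sub_sub_cancel,
    integral_inv_of_pos hε (hε.trans_le hεx), Real.log_div (hε.trans_le hεx).ne' hε.ne']

theorem HasDerivWithinAt.tendsto_sub_div_nhdsGT_zero {g : ℝ → ℝ} {a x d : ℝ} (hax : a < x)
    (h : HasDerivWithinAt g d (Icc a x) x) :
    Tendsto (fun ε => (g (x - ε) - g x) / ε) (𝓝[>] 0) (𝓝 (-d)) := by
  have hleft : Tendsto (slope g x) (𝓝[<] x) (𝓝 d) :=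
    (hasDerivWithinAt_iff_tendsto_slope' (s := Iio x) (lt_irrefl x)).1
      (h.mono_of_mem_nhdsWithin (Icc_mem_nhdsLT hax))
  refine (hleft.comp (tendsto_const_sub_nhdsGT_zero x)).neg.congr fun ε => ?_
  rw [Function.comp_apply, slope_def_field, sub_sub_cancel_left, div_neg, neg_neg]

section FinitePart

variable {g g' : ℝ → ℝ} {a x : ℝ}

theorem intervalIntegrable_sub_div_of_holder {C α : ℝ} (hα : 0 < α) (hax : a ≤ x)
    (hg : ContinuousOn g (Ico a x)) (hC : ∀ t ∈ Ico a x, |g t - g x| ≤ C * (x - t) ^ α) :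
    IntervalIntegrable (fun t => (g t - g x) / (x - t)) volume a x := by
  have hdom : IntervalIntegrable (fun t => |C| * (x - t) ^ (α - 1)) volume a x := by
    have := intervalIntegral.intervalIntegrable_rpow' (a := x - a) (b := 0) (r := α - 1)
      (by linarith)
    simpa using (this.comp_sub_left x).const_mul |C|
  refine hdom.mono_fun ?_ ?_
  all_goals rw [uIoc_of_le hax, ← Measure.restrict_congr_set Ioo_ae_eq_Ioc]
  · refine ContinuousOn.aestronglyMeasurable ?_ measurableSet_Ioo
    exact ((hg.mono Ioo_subset_Ico_self).sub continuousOn_const).div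
      (continuous_const.sub continuous_id).continuousOn fun t ht => (sub_pos.2 ht.2).ne'
  · refine (ae_restrict_iff' measurableSet_Ioo).2 (ae_of_all _ fun t ht => ?_)
    have hpos : 0 < x - t := sub_pos.2 ht.2
    calc ‖(g t - g x) / (x - t)‖ = |g t - g x| / (x - t) := by
          rw [Real.norm_eq_abs, abs_div, abs_of_pos hpos]
      _ ≤ C * (x - t) ^ α / (x - t) := by gcongr; exact hC t (Ioo_subset_Ico_self ht)
      _ ≤ |C| * (x - t) ^ α / (x - t) := by gcongr; exact le_abs_self C
      _ = ‖|C| * (x - t) ^ (α - 1)‖ := by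
          rw [Real.norm_of_nonneg (by positivity : (0 : ℝ) ≤ |C| * (x - t) ^ (α - 1)),
            Real.rpow_sub_one hpos.ne']
          ring

theorem hasPF1Lower_of_holder {C α : ℝ} (hα : 0 < α) (hax : a < x)
    (hg : ContinuousOn g (Ico a x)) (hC : ∀ t ∈ Ico a x, |g t - g x| ≤ C * (x - t) ^ α) :
    HasPF1Lower g a x ((∫ t in a..x, (g t - g x) / (x - t)) + g x * Real.log (x - a)) := by
  have hint := intervalIntegrable_sub_div_of_holder hα hax.le hg hC
  refine ((tendsto_intervalIntegral_sub_nhdsGT_zero hax hint).add_const _).congr' ?_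
  filter_upwards [Ioo_mem_nhdsGT (sub_pos.2 hax)] with ε ⟨hε, hεx⟩
  have haε : a ≤ x - ε := by linarith
  have hsub : Icc a (x - ε) ⊆ Ico a x := Icc_subset_Ico_right (by linarith)
  have hne : ∀ t ∈ Icc a (x - ε), x - t ≠ 0 := fun t ht => (sub_pos.2 (hsub ht).2).ne'
  have hinv : IntervalIntegrable (fun t => (x - t)⁻¹) volume a (x - ε) :=
    ((continuous_const.sub continuous_id).continuousOn.inv₀ hne).intervalIntegrable_of_Icc haε
  have hsplit : ∫ t in a..x - ε, g t / (x - t)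
      = (∫ t in a..x - ε, (g t - g x) / (x - t)) + g x * ∫ t in a..x - ε, (x - t)⁻¹ := by
    have hsub' : uIcc a (x - ε) ⊆ uIcc a x := by
      rw [uIcc_of_le haε, uIcc_of_le hax.le]
      exact hsub.trans Ico_subset_Icc_self
    rw [← intervalIntegral.integral_const_mul,
      ← intervalIntegral.integral_add (hint.mono_set hsub') (hinv.const_mul _)]
    refine intervalIntegral.integral_congr fun t ht => ?_
    rw [uIcc_of_le haε] at ht
    field_simp [hne t ht]
    ring
  rw [hsplit, integral_inv_const_sub hε hεx.le]
  ring

theorem integral_div_sub_sq_eq {ε : ℝ} (hε : 0 < ε) (hεx : ε ≤ x - a)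
    (hg : ContinuousOn g (Ico a x)) (hderiv : ∀ t ∈ Ioo a x, HasDerivAt g (g' t) t)
    (hg' : ContinuousOn g' (Ico a x)) :
    ∫ t in a..x - ε, g t / (t - x) ^ 2
      = g (x - ε) / ε - g a / (x - a) - ∫ t in a..x - ε, g' t / (x - t) := by
  have haε : a ≤ x - ε := by linarith
  have hsub : Icc a (x - ε) ⊆ Ico a x := Icc_subset_Ico_right (by linarith)
  have hne : ∀ t ∈ Icc a (x - ε), x - t ≠ 0 := fun t ht => (sub_pos.2 (hsub ht).2).ne'
  have hcont : ContinuousOn (fun t : ℝ => x - t) (Icc a (x - ε)) := by fun_prop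
  have hF : ∀ t ∈ Ioo a (x - ε), HasDerivAt (fun s => g s / (x - s))
      (g' t / (x - t) + g t / (t - x) ^ 2) t := by
    intro t ht
    have hxt := hne t (Ioo_subset_Icc_self ht)
    refine ((hderiv t ⟨ht.1, by linarith [ht.2]⟩).div ((hasDerivAt_id t).const_sub x)
      hxt).congr_deriv ?_
    rw [id, show (t - x) ^ 2 = (x - t) ^ 2 by ring]
    field_simp
    ring
  have hi1 : IntervalIntegrable (fun t => g' t / (x - t)) volume a (x - ε) :=
    ((hg'.mono hsub).div hcont hne).intervalIntegrable_of_Icc haε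
  have hi2 : IntervalIntegrable (fun t => g t / (t - x) ^ 2) volume a (x - ε) := by
    refine ((hg.mono hsub).div (by fun_prop) fun t ht => ?_).intervalIntegrable_of_Icc haε
    exact pow_ne_zero 2 (sub_ne_zero.2 (hsub ht).2.ne)
  have hFTC := intervalIntegral.integral_eq_sub_of_hasDerivAt_of_le haε
    ((hg.mono hsub).div hcont hne) hF (hi1.add hi2)
  rw [intervalIntegral.integral_add hi1 hi2] at hFTC
  simp only [Pi.div_apply, sub_sub_cancel] at hFTC
  linarith

theorem HasPF1Lower.hasPF2Lower {L : ℝ} (hax : a < x)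
    (hg : ∀ t ∈ Icc a x, HasDerivWithinAt g (g' t) (Icc a x) t)
    (hg' : ContinuousOn g' (Ico a x)) (hL : HasPF1Lower g' a x L) :
    HasPF2Lower g (g' x) a x (-L - g' x - g a / (x - a)) := by
  have hgc : ContinuousOn g (Ico a x) := fun t ht =>
    (hg t (Ico_subset_Icc_self ht)).continuousWithinAt.mono Ico_subset_Icc_self
  have hderiv : ∀ t ∈ Ioo a x, HasDerivAt g (g' t) t := fun t ht =>
    (hg t (Ioo_subset_Icc_self ht)).hasDerivAt (Icc_mem_nhds ht.1 ht.2)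
  have hslope := (hg x (right_mem_Icc.2 hax.le)).tendsto_sub_div_nhdsGT_zero hax
  rw [show -L - g' x - g a / (x - a) = -g' x - g a / (x - a) - L by ring]
  refine ((hslope.sub_const _).sub hL).congr' ?_
  filter_upwards [Ioo_mem_nhdsGT (sub_pos.2 hax)] with ε ⟨hε, hεx⟩
  rw [integral_div_sub_sq_eq hε hεx.le hgc hderiv hg']
  ring

end FinitePart

theorem stmt5_general (G : Set E3)
    (E₀ Em α : ℝ) (hα : 0 < α)
    (f fE : E3 → ℝ → ℝ → ℝ) (C : ℝ)
    (hfE : ContinuousOn (fun p : E3 × ℝ × ℝ => fE p.1 p.2.1 p.2.2)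
      (closure G ×ˢ Set.Icc E₀ Em ×ˢ Set.Icc E₀ Em))
    (hderiv : ∀ x ∈ closure G, ∀ E' ∈ Set.Icc E₀ Em, ∀ E ∈ Set.Icc E₀ Em,
      HasDerivWithinAt (fun t => f x E' t) (fE x E' E) (Set.Icc E₀ Em) E)
    (hHolder : ∀ x ∈ closure G, ∀ E' ∈ Set.Icc E₀ Em, ∀ E₁ ∈ Set.Icc E₀ Em,
      ∀ E₂ ∈ Set.Icc E₀ Em, |fE x E' E₁ - fE x E' E₂| ≤ C * |E₁ - E₂| ^ α) :
    ∀ x ∈ closure G, ∀ E' ∈ Set.Ioc E₀ Em, ∃ L₁ : ℝ,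
      HasPF1Lower (fun E => fE x E' E) E₀ E' L₁ ∧
      HasPF2Lower (fun E => f x E' E) (fE x E' E') E₀ E'
        (- L₁ - fE x E' E' - f x E' E₀ / (E' - E₀)) := by
  intro x hx E' hE'
  have hE'I : E' ∈ Icc E₀ Em := Ioc_subset_Icc_self hE'
  have hsub : Ico E₀ E' ⊆ Icc E₀ Em := Ico_subset_Icc_self.trans (Icc_subset_Icc_right hE'.2)
  have hslice : ContinuousOn (fun E => fE x E' E) (Ico E₀ E') :=
    hfE.comp (show ContinuousOn (fun t : ℝ => ((x, E', t) : E3 × ℝ × ℝ)) _ by fun_prop)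
      fun t ht => ⟨hx, hE'I, hsub ht⟩
  have hHolderAt : ∀ t ∈ Ico E₀ E', |fE x E' t - fE x E' E'| ≤ C * (E' - t) ^ α := by
    intro t ht
    have := hHolder x hx E' hE'I t (hsub ht) E' hE'I
    rwa [abs_sub_comm t, abs_of_pos (sub_pos.2 ht.2)] at this
  have hPF1 := hasPF1Lower_of_holder hα hE'.1 hslice hHolderAt
  refine ⟨_, hPF1, hPF1.hasPF2Lower hE'.1 (fun t ht => ?_) hslice⟩
  exact (hderiv x hx E' hE'I t (Icc_subset_Icc_right hE'.2 ht)).mono (Icc_subset_Icc_right hE'.2)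

/-- for `f ∈ C(Ḡ×I', C^{1+α}(I))` (with `fE = ∂f/∂E` continuous, `α`-Hölder
in `E` uniformly), for `x ∈ Ḡ`, `E' ∈ (E₀,E_m]` both finite parts exist and
`p.f.∫_{E₀}^{E'} f(x,E',E)/(E'−E)² dE
 = −p.f.∫_{E₀}^{E'} (∂f/∂E)(x,E',E)/(E'−E) dE − (∂f/∂E)(x,E',E') − f(x,E',E₀)/(E'−E₀)`. -/
theorem stmt5 (G : Set E3) (hGopen : IsOpen G) (hGbdd : Bornology.IsBounded G)
    (E₀ Em α : ℝ) (hE₀ : 0 ≤ E₀) (hI : E₀ < Em) (hα : 0 < α)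
    (f fE : E3 → ℝ → ℝ → ℝ) (C : ℝ)
    (hf : ContinuousOn (fun p : E3 × ℝ × ℝ => f p.1 p.2.1 p.2.2)
      (closure G ×ˢ Set.Icc E₀ Em ×ˢ Set.Icc E₀ Em))
    (hfE : ContinuousOn (fun p : E3 × ℝ × ℝ => fE p.1 p.2.1 p.2.2)
      (closure G ×ˢ Set.Icc E₀ Em ×ˢ Set.Icc E₀ Em))
    (hderiv : ∀ x ∈ closure G, ∀ E' ∈ Set.Icc E₀ Em, ∀ E ∈ Set.Icc E₀ Em,
      HasDerivWithinAt (fun t => f x E' t) (fE x E' E) (Set.Icc E₀ Em) E)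
    (hHolder : ∀ x ∈ closure G, ∀ E' ∈ Set.Icc E₀ Em, ∀ E₁ ∈ Set.Icc E₀ Em,
      ∀ E₂ ∈ Set.Icc E₀ Em, |fE x E' E₁ - fE x E' E₂| ≤ C * |E₁ - E₂| ^ α) :
    ∀ x ∈ closure G, ∀ E' ∈ Set.Ioc E₀ Em, ∃ L₁ : ℝ,
      HasPF1Lower (fun E => fE x E' E) E₀ E' L₁ ∧
      HasPF2Lower (fun E => f x E' E) (fE x E' E') E₀ E'
        (- L₁ - fE x E' E' - f x E' E₀ / (E' - E₀)) :=
  stmt5_general G E₀ Em α hα f fE C hfE hderiv hHolder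
end
end

section
/- Let α > 0 and let f : Ḡ×I'×I×S → ℝ be continuous, continuously differentiable in its second (primed) variable E', with ∂f/∂E' α-Hölder in E' uniformly (f ∈ C(Ḡ×S×I, C^{1+α}(I'))). Then for every x ∈ Ḡ and E ∈ [E₀,E_m) one may interchange the spherical integration and the second-order Hadamard finite part: ∫_S ( p.f.∫_E^{E_m} f(x,E',E,ω)/(E'−E)² dE' ) dω = p.f.∫_E^{E_m} ( ∫_S f(x,E',E,ω) dω )/(E'−E)² dE', all integrals and finite parts existing. -/
open MeasureTheory Filter Set Metric
open scoped Topology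

noncomputable section

/-- The surface measure on the unit sphere `S² ⊂ ℝ³`, viewed as a measure on `ℝ³`
(carried on the unit sphere). -/
def nuS : Measure E3 := ((volume : Measure E3).toSphere).map Subtype.val

/-! Writing `R(t) = (g t - g E - g'(E) (t - E)) / (t - E)²`, one has
`∫_{E+ε}^b g/(t-E)² = ∫_{E+ε}^b R + g(E) (1/ε - 1/(b-E)) + g'(E) (log (b-E) - log ε)`:
the divergent terms are exactly the counterterms of the finite part, so the finite part exists
and equals `∫_E^b R - g(E)/(b-E) + g'(E) log (b-E)` as soon as `R` is integrable.
Hölder continuity of `∂f/∂E'` and the mean value theorem give `|R| ≤ C (t-E)^(α-1)` uniformly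
in `ω`, so `R` is integrable on `S² × (E, b]`. This value of the finite part is affine in
`(g, g'(E))` up to the `∫ R` term, which commutes with `∫_S` by Fubini; the same uniform bound
makes `∫_S f` differentiable at `E` with derivative `∫_S ∂f/∂E'`. -/

def taylorRem (g : ℝ → ℝ) (d E t : ℝ) : ℝ := g t - g E - d * (t - E)

def taylorQuot (g : ℝ → ℝ) (d E t : ℝ) : ℝ := taylorRem g d E t / (t - E) ^ 2

def pf2Value (g : ℝ → ℝ) (d E b : ℝ) : ℝ :=
  (∫ t in E..b, taylorQuot g d E t) - g E / (b - E) + d * Real.log (b - E)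

section FinitePart

variable {g : ℝ → ℝ} {d E a b : ℝ}

lemma integral_one_div_sub_sq (hEa : E < a) (hab : a ≤ b) :
    ∫ t in a..b, 1 / (t - E) ^ 2 = 1 / (a - E) - 1 / (b - E) := by
  have h0 : (0 : ℝ) ∉ uIcc (a - E) (b - E) := by
    rw [uIcc_of_le (by linarith)]; exact fun h => by linarith [h.1]
  have hzpow : ∫ u in (a - E)..(b - E), u ^ (-2 : ℤ) = 1 / (a - E) - 1 / (b - E) := by
    rw [integral_zpow (Or.inr ⟨by norm_num, h0⟩)]
    norm_num
    ring
  simpa [zpow_neg, zpow_two, pow_two] using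
    (intervalIntegral.integral_comp_sub_right (fun u : ℝ => u ^ (-2 : ℤ)) E).trans hzpow

lemma integral_one_div_sub (hEa : E < a) (hab : a ≤ b) :
    ∫ t in a..b, 1 / (t - E) = Real.log (b - E) - Real.log (a - E) := by
  have h0 : (0 : ℝ) ∉ uIcc (a - E) (b - E) := by
    rw [uIcc_of_le (by linarith)]; exact fun h => by linarith [h.1]
  rw [intervalIntegral.integral_comp_sub_right (fun u : ℝ => 1 / u) E, integral_one_div h0,
    Real.log_div (by linarith) (by linarith)]

lemma integral_div_sub_sq_eq_s7 (hEa : E < a) (hab : a ≤ b)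
    (hR : IntervalIntegrable (taylorQuot g d E) volume a b) :
    ∫ t in a..b, g t / (t - E) ^ 2 = (∫ t in a..b, taylorQuot g d E t)
      + g E * (1 / (a - E) - 1 / (b - E)) + d * (Real.log (b - E) - Real.log (a - E)) := by
  have hne : ∀ t ∈ uIcc a b, t - E ≠ 0 := fun t ht => by
    rw [uIcc_of_le hab] at ht; linarith [ht.1]
  have hcont : ∀ n : ℕ, ContinuousOn (fun t : ℝ => 1 / (t - E) ^ n) (uIcc a b) := fun n =>
    continuousOn_const.div (by fun_prop) fun t ht => pow_ne_zero n (hne t ht)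
  have h2 := ((hcont 2).intervalIntegrable (μ := volume)).const_mul (g E)
  have h1 := ((hcont 1).intervalIntegrable (μ := volume)).const_mul d
  simp only [pow_one] at h1
  have hsplit : EqOn (fun t => g t / (t - E) ^ 2)
      (fun t => taylorQuot g d E t + g E * (1 / (t - E) ^ 2) + d * (1 / (t - E))) (uIcc a b) :=
    fun t ht => by
      have := hne t ht
      simp only [taylorQuot, taylorRem]
      field_simp
      ring
  rw [intervalIntegral.integral_congr hsplit, intervalIntegral.integral_add (hR.add h2) h1,
    intervalIntegral.integral_add hR h2, intervalIntegral.integral_const_mul,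
    intervalIntegral.integral_const_mul, integral_one_div_sub_sq hEa hab,
    integral_one_div_sub hEa hab]

theorem hasPF2Upper_pf2Value (hEb : E < b) (hR : IntegrableOn (taylorQuot g d E) (Ioc E b)) :
    HasPF2Upper g d E b (pf2Value g d E b) := by
  have hR' : IntegrableOn (taylorQuot g d E) (uIcc E b) := by
    rwa [uIcc_of_le hEb.le, integrableOn_Icc_iff_integrableOn_Ioc]
  have hprim : Tendsto (fun ε => ∫ t in (E + ε)..b, taylorQuot g d E t) (𝓝[>] 0)
      (𝓝 (∫ t in E..b, taylorQuot g d E t)) := by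
    have hshift : Tendsto (fun ε : ℝ => E + ε) (𝓝[>] 0) (𝓝[uIcc E b] E) := by
      refine tendsto_nhdsWithin_of_tendsto_nhds_of_eventually_within _ ?_ ?_
      · simpa using ((continuous_const_add E).tendsto 0).mono_left nhdsWithin_le_nhds
      · filter_upwards [Ioo_mem_nhdsGT (sub_pos.2 hEb)] with ε hε
        rw [uIcc_of_le hEb.le]; constructor <;> linarith [hε.1, hε.2]
    exact ((intervalIntegral.continuousOn_primitive_interval_left hR') E
      left_mem_uIcc).tendsto.comp hshift
  refine ((hprim.sub_const _).add_const _).congr' ?_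
  filter_upwards [Ioo_mem_nhdsGT (sub_pos.2 hEb)] with ε ⟨hε, hεb⟩
  have hRε : IntervalIntegrable (taylorQuot g d E) volume (E + ε) b :=
    (intervalIntegrable_iff_integrableOn_Ioc_of_le (by linarith)).2
      (hR.mono_set (Ioc_subset_Ioc_left (by linarith)))
  rw [integral_div_sub_sq_eq_s7 (by linarith) (by linarith) hRε, add_sub_cancel_left]
  field_simp
  ring

end FinitePart

section TaylorBound

variable {g : ℝ → ℝ} {d E b K β : ℝ}

lemma integrableOn_const_mul_sub_rpow {r : ℝ} (hr : -1 < r) :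
    IntegrableOn (fun t : ℝ => K * (t - E) ^ r) (Ioc E b) := by
  have h : IntervalIntegrable (fun u : ℝ => u ^ r) volume (E - E) (b - E) :=
    intervalIntegral.intervalIntegrable_rpow' hr
  simpa using ((h.comp_sub_right E).const_mul K).1

lemma norm_taylorQuot_le {t : ℝ} (ht : E < t)
    (hb : |taylorRem g d E t| ≤ K * (t - E) ^ β * (t - E)) :
    ‖taylorQuot g d E t‖ ≤ K * (t - E) ^ (β - 1) := by
  have htE : 0 < t - E := sub_pos.2 ht
  rw [taylorQuot, Real.norm_eq_abs, abs_div, abs_of_pos (pow_pos htE 2),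
    div_le_iff₀ (pow_pos htE 2), Real.rpow_sub_one htE.ne']
  calc |taylorRem g d E t| ≤ K * (t - E) ^ β * (t - E) := hb
    _ = K * ((t - E) ^ β / (t - E)) * (t - E) ^ 2 := by field_simp

lemma integrableOn_taylorQuot (hβ : 0 < β) (hg : ContinuousOn g (Ioc E b))
    (hb : ∀ t ∈ Ioc E b, |taylorRem g d E t| ≤ K * (t - E) ^ β * (t - E)) :
    IntegrableOn (taylorQuot g d E) (Ioc E b) := by
  have hcont : ContinuousOn (taylorQuot g d E) (Ioc E b) :=
    ((hg.sub continuousOn_const).sub (by fun_prop)).div (by fun_prop)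
      fun t ht => pow_ne_zero 2 (sub_pos.2 ht.1).ne'
  refine (integrableOn_const_mul_sub_rpow (K := K) (r := β - 1) (by linarith)).mono'
    (hcont.aestronglyMeasurable measurableSet_Ioc) ?_
  filter_upwards [ae_restrict_mem measurableSet_Ioc] with t ht
  exact norm_taylorQuot_le ht.1 (hb t ht)

lemma hasDerivWithinAt_Ici_of_abs_taylorRem_le (hEb : E < b) (hβ : 0 < β)
    (hb : ∀ t ∈ Icc E b, |taylorRem g d E t| ≤ K * (t - E) ^ β * (t - E)) :
    HasDerivWithinAt g d (Ici E) E := by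
  have hsmall : Tendsto (fun t => (t - E) ^ β) (𝓝[Ici E] E) (𝓝 0) := by
    have hsub : Tendsto (fun t => t - E) (𝓝[Ici E] E) (𝓝 0) :=
      tendsto_nhdsWithin_of_tendsto_nhds (by simpa using (continuous_sub_right E).tendsto E)
    have h := (Real.continuousAt_rpow_const 0 β (Or.inr hβ.le)).tendsto.comp hsub
    rwa [Real.zero_rpow hβ.ne'] at h
  have hbigO : (fun t => taylorRem g d E t) =O[𝓝[Ici E] E] fun t => (t - E) ^ β * (t - E) := by
    refine Asymptotics.IsBigO.of_bound |K| ?_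
    filter_upwards [Icc_mem_nhdsGE hEb] with t ht
    rw [Real.norm_eq_abs, Real.norm_eq_abs, ← abs_mul, ← mul_assoc]
    exact (hb t ht).trans (le_abs_self _)
  rw [hasDerivWithinAt_iff_isLittleO]
  refine (hbigO.trans_isLittleO ?_).congr_left fun t => by
    simp only [taylorRem, smul_eq_mul]; ring
  simpa using (Asymptotics.isLittleO_one_iff ℝ).2 hsmall |>.mul_isBigO
    (Asymptotics.isBigO_refl (fun t => t - E) _)

lemma abs_taylorRem_le_of_holder {g' : ℝ → ℝ} {C α : ℝ} (hα : 0 ≤ α)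
    (hderiv : ∀ s ∈ Icc E b, HasDerivWithinAt g (g' s) (Icc E b) s)
    (hH : ∀ s ∈ Icc E b, |g' s - g' E| ≤ C * (s - E) ^ α) :
    ∀ t ∈ Icc E b, |taylorRem g (g' E) E t| ≤ C * (t - E) ^ α * (t - E) := by
  intro t ht
  rcases ht.1.eq_or_lt with rfl | hEt
  · simp [taylorRem]
  have hC : 0 ≤ C := nonneg_of_mul_nonneg_left ((abs_nonneg _).trans (hH t ht))
    (Real.rpow_pos_of_pos (sub_pos.2 hEt) α)
  have hsub : Icc E t ⊆ Icc E b := Icc_subset_Icc_right ht.2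
  have hd : ∀ s ∈ Icc E t,
      HasDerivWithinAt (fun s => g s - g' E * s) (g' s - g' E) (Icc E t) s := fun s hs =>
    ((hderiv s (hsub hs)).mono hsub).sub
      (by simpa using (hasDerivWithinAt_id s _).const_mul (g' E))
  have hbound : ∀ s ∈ Icc E t, ‖g' s - g' E‖ ≤ C * (t - E) ^ α := fun s hs =>
    (hH s (hsub hs)).trans (mul_le_mul_of_nonneg_left
      (Real.rpow_le_rpow (sub_nonneg.2 hs.1) (by linarith [hs.2]) hα) hC)
  have hmvt := (convex_Icc E t).norm_image_sub_le_of_norm_hasDerivWithin_le hd hbound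
    (left_mem_Icc.2 hEt.le) (right_mem_Icc.2 hEt.le)
  rw [Real.norm_eq_abs, Real.norm_eq_abs, abs_of_pos (sub_pos.2 hEt)] at hmvt
  calc |taylorRem g (g' E) E t| = |g t - g' E * t - (g E - g' E * E)| := by
        rw [taylorRem]; ring_nf
    _ ≤ C * (t - E) ^ α * (t - E) := hmvt

end TaylorBound

lemma integrable_prod_of_norm_le {α β F : Type*} [MeasurableSpace α] [MeasurableSpace β]
    [NormedAddCommGroup F] {μ : Measure α} {ν : Measure β} [IsFiniteMeasure μ] [SFinite ν]
    {f : α × β → F} {B : β → ℝ} (hf : AEStronglyMeasurable f (μ.prod ν)) (hB : Integrable B ν)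
    (hle : ∀ᵐ x ∂μ, ∀ᵐ y ∂ν, ‖f (x, y)‖ ≤ B y) : Integrable f (μ.prod ν) := by
  refine (integrable_prod_iff hf).2 ⟨?_, ?_⟩
  · filter_upwards [hle, hf.prodMk_left] with x hx hmeas
    exact hB.mono' hmeas hx
  · refine (integrable_const (∫ y, B y ∂ν)).mono' hf.norm.integral_prod_right' ?_
    filter_upwards [hle] with x hx
    rw [Real.norm_eq_abs, abs_of_nonneg (integral_nonneg fun _ => norm_nonneg _)]
    exact integral_mono_of_nonneg (ae_of_all _ fun _ => norm_nonneg _) hB hx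

section IntegralOfFamily

variable {X : Type*} [MeasurableSpace X] {μ : Measure X} {g : X → ℝ → ℝ} {d : X → ℝ}
  {E b K β : ℝ}

lemma integral_taylorRem {t : ℝ} (hgt : Integrable (fun ω => g ω t) μ)
    (hgE : Integrable (fun ω => g ω E) μ) (hd : Integrable d μ) :
    ∫ ω, taylorRem (g ω) (d ω) E t ∂μ
      = taylorRem (fun t => ∫ ω, g ω t ∂μ) (∫ ω, d ω ∂μ) E t := by
  simp only [taylorRem]
  rw [integral_sub, integral_sub hgt hgE, integral_mul_const]
  exacts [hgt.sub hgE, hd.mul_const _]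

lemma integral_taylorQuot {t : ℝ} (hgt : Integrable (fun ω => g ω t) μ)
    (hgE : Integrable (fun ω => g ω E) μ) (hd : Integrable d μ) :
    ∫ ω, taylorQuot (g ω) (d ω) E t ∂μ
      = taylorQuot (fun t => ∫ ω, g ω t ∂μ) (∫ ω, d ω ∂μ) E t := by
  simp only [taylorQuot]
  rw [MeasureTheory.integral_div, integral_taylorRem hgt hgE hd]

lemma hasDerivWithinAt_integral_of_abs_taylorRem_le [IsFiniteMeasure μ] (hEb : E < b)
    (hβ : 0 < β) (hg : ∀ t ∈ Icc E b, Integrable (fun ω => g ω t) μ) (hd : Integrable d μ)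
    (htaylor : ∀ᵐ ω ∂μ, ∀ t ∈ Icc E b,
      |taylorRem (g ω) (d ω) E t| ≤ K * (t - E) ^ β * (t - E)) :
    HasDerivWithinAt (fun t => ∫ ω, g ω t ∂μ) (∫ ω, d ω ∂μ) (Ici E) E := by
  refine hasDerivWithinAt_Ici_of_abs_taylorRem_le (K := K * μ.real univ) hEb hβ fun t ht => ?_
  rw [← integral_taylorRem (hg t ht) (hg E (left_mem_Icc.2 hEb.le)) hd]
  calc |∫ ω, taylorRem (g ω) (d ω) E t ∂μ|
      ≤ K * (t - E) ^ β * (t - E) * μ.real univ := by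
        simpa only [Real.norm_eq_abs] using
          norm_integral_le_of_norm_le_const
            (htaylor.mono fun ω hω => (Real.norm_eq_abs _).trans_le (hω t ht))
    _ = K * μ.real univ * (t - E) ^ β * (t - E) := by ring

lemma integrable_taylorQuot_prod [IsFiniteMeasure μ] (hβ : 0 < β)
    (hmeas : AEStronglyMeasurable (fun p : X × ℝ => taylorQuot (g p.1) (d p.1) E p.2)
      (μ.prod (volume.restrict (Ioc E b))))
    (htaylor : ∀ᵐ ω ∂μ, ∀ t ∈ Icc E b,
      |taylorRem (g ω) (d ω) E t| ≤ K * (t - E) ^ β * (t - E)) :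
    Integrable (fun p : X × ℝ => taylorQuot (g p.1) (d p.1) E p.2)
      (μ.prod (volume.restrict (Ioc E b))) := by
  refine integrable_prod_of_norm_le hmeas
    (integrableOn_const_mul_sub_rpow (K := K) (r := β - 1) (by linarith)) ?_
  filter_upwards [htaylor] with ω hω
  filter_upwards [ae_restrict_mem measurableSet_Ioc] with t ht
  exact norm_taylorQuot_le ht.1 (hω t (Ioc_subset_Icc_self ht))

lemma integrable_pf2Value (hEb : E < b) (hgE : Integrable (fun ω => g ω E) μ)
    (hd : Integrable d μ)
    (hR : Integrable (fun p : X × ℝ => taylorQuot (g p.1) (d p.1) E p.2)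
      (μ.prod (volume.restrict (Ioc E b)))) :
    Integrable (fun ω => pf2Value (g ω) (d ω) E b) μ := by
  simp only [pf2Value, intervalIntegral.integral_of_le hEb.le]
  exact (hR.integral_prod_left.sub (hgE.div_const _)).add (hd.mul_const _)

lemma integral_pf2Value [SFinite μ] (hEb : E < b)
    (hg : ∀ t ∈ Icc E b, Integrable (fun ω => g ω t) μ) (hd : Integrable d μ)
    (hR : Integrable (fun p : X × ℝ => taylorQuot (g p.1) (d p.1) E p.2)
      (μ.prod (volume.restrict (Ioc E b)))) :
    ∫ ω, pf2Value (g ω) (d ω) E b ∂μ = pf2Value (fun t => ∫ ω, g ω t ∂μ) (∫ ω, d ω ∂μ) E b := by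
  have hgE := hg E (left_mem_Icc.2 hEb.le)
  have hI : Integrable (fun ω => ∫ t in Ioc E b, taylorQuot (g ω) (d ω) E t) μ :=
    hR.integral_prod_left
  simp only [pf2Value, intervalIntegral.integral_of_le hEb.le]
  rw [integral_add, integral_sub hI (hgE.div_const _), integral_div, integral_mul_const,
    integral_integral_swap (f := fun ω t => taylorQuot (g ω) (d ω) E t) hR]
  · congr 2
    exact setIntegral_congr_fun measurableSet_Ioc fun t ht =>
      integral_taylorQuot (hg t (Ioc_subset_Icc_self ht)) hgE hd
  exacts [hI.sub (hgE.div_const _), hd.mul_const _]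

theorem hasPF2Upper_integral [SFinite μ] (hEb : E < b)
    (hg : ∀ t ∈ Icc E b, Integrable (fun ω => g ω t) μ) (hd : Integrable d μ)
    (hR : Integrable (fun p : X × ℝ => taylorQuot (g p.1) (d p.1) E p.2)
      (μ.prod (volume.restrict (Ioc E b)))) :
    HasPF2Upper (fun t => ∫ ω, g ω t ∂μ) (∫ ω, d ω ∂μ) E b
      (∫ ω, pf2Value (g ω) (d ω) E b ∂μ) := by
  rw [integral_pf2Value hEb hg hd hR]
  refine hasPF2Upper_pf2Value hEb (IntegrableOn.congr_fun hR.integral_prod_right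
    (fun t ht => ?_) measurableSet_Ioc)
  exact integral_taylorQuot (hg t (Ioc_subset_Icc_self ht)) (hg E (left_mem_Icc.2 hEb.le)) hd

end IntegralOfFamily

lemma continuousOn_taylorQuot_prod {X : Type*} [TopologicalSpace X] {s : Set X}
    {g : X → ℝ → ℝ} {d : X → ℝ} {E b : ℝ}
    (hg : ContinuousOn (fun p : X × ℝ => g p.1 p.2) (s ×ˢ Icc E b)) (hd : ContinuousOn d s) :
    ContinuousOn (fun p : X × ℝ => taylorQuot (g p.1) (d p.1) E p.2) (s ×ˢ Ioc E b) := by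
  have hgE : ContinuousOn (fun p : X × ℝ => g p.1 E) (s ×ˢ Ioc E b) :=
    hg.comp (f := fun p : X × ℝ => (p.1, E)) (by fun_prop) fun p hp =>
      ⟨hp.1, le_rfl, hp.2.1.le.trans hp.2.2⟩
  exact (((hg.mono (prod_mono_right Ioc_subset_Icc_self)).sub hgE).sub
    ((hd.comp continuousOn_fst fun p hp => hp.1).mul (by fun_prop))).div (by fun_prop)
    fun p hp => pow_ne_zero 2 (sub_pos.2 hp.2.1).ne'

instance isFiniteMeasure_nuS : IsFiniteMeasure nuS := by
  rw [nuS]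
  infer_instance

lemma ae_mem_sphere_nuS : ∀ᵐ ω ∂nuS, ω ∈ sphere (0 : E3) 1 :=
  (ae_map_iff measurable_subtype_coe.aemeasurable isClosed_sphere.measurableSet).2
    (ae_of_all _ Subtype.prop)

lemma integrable_nuS_of_continuousOn {φ : E3 → ℝ} (hφ : ContinuousOn φ (sphere 0 1)) :
    Integrable φ nuS := by
  rw [← Measure.restrict_eq_self_of_ae_mem ae_mem_sphere_nuS]
  exact hφ.integrableOn_compact (isCompact_sphere _ _)

lemma aestronglyMeasurable_nuS_prod {φ : E3 × ℝ → ℝ} {s : Set ℝ} (hs : MeasurableSet s)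
    (hφ : ContinuousOn φ (sphere 0 1 ×ˢ s)) :
    AEStronglyMeasurable φ (nuS.prod (volume.restrict s)) := by
  rw [← Measure.restrict_eq_self_of_ae_mem ae_mem_sphere_nuS, Measure.prod_restrict]
  exact hφ.aestronglyMeasurable (isClosed_sphere.measurableSet.prod hs)

theorem stmt7_general (G : Set E3)
    (E₀ Em α : ℝ) (hα : 0 < α)
    (f f' : E3 → ℝ → ℝ → E3 → ℝ) (C : ℝ)
    (hf : ContinuousOn (fun p : E3 × ℝ × ℝ × E3 => f p.1 p.2.1 p.2.2.1 p.2.2.2)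
      (closure G ×ˢ Set.Icc E₀ Em ×ˢ Set.Icc E₀ Em ×ˢ sphere (0 : E3) 1))
    (hf' : ContinuousOn (fun p : E3 × ℝ × ℝ × E3 => f' p.1 p.2.1 p.2.2.1 p.2.2.2)
      (closure G ×ˢ Set.Icc E₀ Em ×ˢ Set.Icc E₀ Em ×ˢ sphere (0 : E3) 1))
    (hderiv : ∀ x ∈ closure G, ∀ E ∈ Set.Icc E₀ Em, ∀ ω ∈ sphere (0 : E3) 1,
      ∀ E' ∈ Set.Icc E₀ Em,
      HasDerivWithinAt (fun s => f x s E ω) (f' x E' E ω) (Set.Icc E₀ Em) E')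
    (hHolder : ∀ x ∈ closure G, ∀ E ∈ Set.Icc E₀ Em, ∀ ω ∈ sphere (0 : E3) 1,
      ∀ E₁' ∈ Set.Icc E₀ Em, ∀ E₂' ∈ Set.Icc E₀ Em,
      |f' x E₁' E ω - f' x E₂' E ω| ≤ C * |E₁' - E₂'| ^ α) :
    ∀ x ∈ closure G, ∀ E ∈ Set.Ico E₀ Em,
      ∃ (S : E3 → ℝ) (L : ℝ),
        (∀ ω ∈ sphere (0 : E3) 1,
          HasPF2Upper (fun E' => f x E' E ω) (f' x E E ω) E Em (S ω)) ∧
        Integrable S nuS ∧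
        HasDerivWithinAt (fun E' => ∫ ω, f x E' E ω ∂nuS)
          (∫ ω, f' x E E ω ∂nuS) (Set.Ici E) E ∧
        HasPF2Upper (fun E' => ∫ ω, f x E' E ω ∂nuS)
          (∫ ω, f' x E E ω ∂nuS) E Em L ∧
        ∫ ω, S ω ∂nuS = L := by
  intro x hx E ⟨hE₀E, hEEm⟩
  have hEI : E ∈ Icc E₀ Em := ⟨hE₀E, hEEm.le⟩
  have hsub : Icc E Em ⊆ Icc E₀ Em := Icc_subset_Icc_left hE₀E
  have hgc : ContinuousOn (fun p : E3 × ℝ => f x p.2 E p.1) (sphere 0 1 ×ˢ Icc E Em) :=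
    hf.comp (f := fun p : E3 × ℝ => (x, p.2, E, p.1)) (by fun_prop)
      fun p hp => ⟨hx, hsub hp.2, hEI, hp.1⟩
  have hdc : ContinuousOn (fun ω => f' x E E ω) (sphere 0 1) :=
    hf'.comp (f := fun ω => (x, E, E, ω)) (by fun_prop) fun ω hω => ⟨hx, hEI, hEI, hω⟩
  have hgω : ∀ ω ∈ sphere (0 : E3) 1, ContinuousOn (fun t => f x t E ω) (Icc E Em) :=
    fun ω hω => hgc.comp (f := fun t => (ω, t)) (by fun_prop) fun t ht => ⟨hω, ht⟩
  have hg : ∀ t ∈ Icc E Em, Integrable (fun ω => f x t E ω) nuS := fun t ht =>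
    integrable_nuS_of_continuousOn (hgc.comp (f := fun ω => (ω, t)) (by fun_prop)
      fun ω hω => ⟨hω, ht⟩)
  have htaylor : ∀ ω ∈ sphere (0 : E3) 1, ∀ t ∈ Icc E Em,
      |taylorRem (fun t => f x t E ω) (f' x E E ω) E t| ≤ C * (t - E) ^ α * (t - E) :=
    fun ω hω => abs_taylorRem_le_of_holder hα.le
      (fun s hs => (hderiv x hx E hEI ω hω s (hsub hs)).mono hsub)
      (fun s hs => by
        simpa [abs_of_nonneg (sub_nonneg.2 hs.1)] using hHolder x hx E hEI ω hω s (hsub hs) E hEI)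
  have htaylor_ae := ae_mem_sphere_nuS.mono htaylor
  have hR := integrable_taylorQuot_prod hα
    (aestronglyMeasurable_nuS_prod measurableSet_Ioc (continuousOn_taylorQuot_prod hgc hdc))
    htaylor_ae
  have hd := integrable_nuS_of_continuousOn hdc
  refine ⟨_, _, fun ω hω => hasPF2Upper_pf2Value hEEm ?_,
    integrable_pf2Value hEEm (hg E (left_mem_Icc.2 hEEm.le)) hd hR,
    hasDerivWithinAt_integral_of_abs_taylorRem_le hEEm hα hg hd htaylor_ae,
    hasPF2Upper_integral hEEm hg hd hR, rfl⟩
  exact integrableOn_taylorQuot hα ((hgω ω hω).mono Ioc_subset_Icc_self)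
    fun t ht => htaylor ω hω t (Ioc_subset_Icc_self ht)

/-- for `f ∈ C(Ḡ×S×I, C^{1+α}(I'))` (with `f' = ∂f/∂E'` continuous,
`α`-Hölder in `E'` uniformly), one may interchange the spherical integration and the
second-order Hadamard finite part:
`∫_S ( p.f.∫_E^{E_m} f(x,E',E,ω)/(E'−E)² dE' ) dω
 = p.f.∫_E^{E_m} ( ∫_S f(x,E',E,ω) dω )/(E'−E)² dE'`, all the pieces existing. -/
theorem stmt7 (G : Set E3) (hGopen : IsOpen G) (hGbdd : Bornology.IsBounded G)
    (E₀ Em α : ℝ) (hE₀ : 0 ≤ E₀) (hI : E₀ < Em) (hα : 0 < α)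
    (f f' : E3 → ℝ → ℝ → E3 → ℝ) (C : ℝ)
    (hf : ContinuousOn (fun p : E3 × ℝ × ℝ × E3 => f p.1 p.2.1 p.2.2.1 p.2.2.2)
      (closure G ×ˢ Set.Icc E₀ Em ×ˢ Set.Icc E₀ Em ×ˢ sphere (0 : E3) 1))
    (hf' : ContinuousOn (fun p : E3 × ℝ × ℝ × E3 => f' p.1 p.2.1 p.2.2.1 p.2.2.2)
      (closure G ×ˢ Set.Icc E₀ Em ×ˢ Set.Icc E₀ Em ×ˢ sphere (0 : E3) 1))
    (hderiv : ∀ x ∈ closure G, ∀ E ∈ Set.Icc E₀ Em, ∀ ω ∈ sphere (0 : E3) 1,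
      ∀ E' ∈ Set.Icc E₀ Em,
      HasDerivWithinAt (fun s => f x s E ω) (f' x E' E ω) (Set.Icc E₀ Em) E')
    (hHolder : ∀ x ∈ closure G, ∀ E ∈ Set.Icc E₀ Em, ∀ ω ∈ sphere (0 : E3) 1,
      ∀ E₁' ∈ Set.Icc E₀ Em, ∀ E₂' ∈ Set.Icc E₀ Em,
      |f' x E₁' E ω - f' x E₂' E ω| ≤ C * |E₁' - E₂'| ^ α) :
    ∀ x ∈ closure G, ∀ E ∈ Set.Ico E₀ Em,
      ∃ (S : E3 → ℝ) (L : ℝ),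
        (∀ ω ∈ sphere (0 : E3) 1,
          HasPF2Upper (fun E' => f x E' E ω) (f' x E E ω) E Em (S ω)) ∧
        Integrable S nuS ∧
        HasDerivWithinAt (fun E' => ∫ ω, f x E' E ω ∂nuS)
          (∫ ω, f' x E E ω ∂nuS) (Set.Ici E) E ∧
        HasPF2Upper (fun E' => ∫ ω, f x E' E ω ∂nuS)
          (∫ ω, f' x E E ω ∂nuS) E Em L ∧
        ∫ ω, S ω ∂nuS = L :=
  stmt7_general G E₀ Em α hα f f' C hf hf' hderiv hHolder
end
end

section
/- Let E₀ > 0 and let ψ : Ḡ×ℝ³×I → ℝ be continuous, twice continuously differentiable in E and three times continuously differentiable in the middle (spatial/direction) variable y (ψ ∈ C(Ḡ, C²(I, C³(ℝ³)))). Fix x ∈ Ḡ, ω ∈ S, E ∈ [E₀,E_m), and define F(E') := ∫_0^{2π} ψ(x, γ(E',E,ω)(s), E') ds for E' ∈ [E, E_m]. Then: (1) for every E' ∈ (E, E_m), F is differentiable at E' with F'(E') = ∫_0^{2π} ⟨∇_yψ(x, γ(E',E,ω)(s), E'), (∂γ/∂E')(E',E,ω)(s)⟩ ds + ∫_0^{2π}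 (∂ψ/∂E)(x, γ(E',E,ω)(s), E') ds; and (2) the limit L := lim_{E'→E⁺} ∫_0^{2π} ⟨∇_yψ(x, γ(E',E,ω)(s), E'), (∂γ/∂E')(E',E,ω)(s)⟩ ds exists, and F has a right derivative at E' = E equal to 2π·(∂ψ/∂E)(x,ω,E) + L. -/
open MeasureTheory Filter Set Metric
open scoped Topology Real

noncomputable section

/-- The vector `(a,b,c) ∈ ℝ³` as an element of `EuclideanSpace ℝ (Fin 3)`. -/
def vec3 (a b c : ℝ) : E3 := (EuclideanSpace.equiv (Fin 3) ℝ).symm ![a, b, c]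

/-- The third standard basis vector `e₃`. -/
def e₃ : E3 := EuclideanSpace.single 2 1

/-- `μ(E',E) = √( E(E'+2) / (E'(E+2)) )`. -/
def mu (E' E : ℝ) : ℝ := Real.sqrt (E * (E' + 2) / (E' * (E + 2)))

/-- The parametrization `γ(E',E,ω)(s) = R(ω)(√(1−μ²)cos s, √(1−μ²)sin s, μ)` of the circle
`{ω' ∈ S : ω'·ω = μ(E',E)}`. -/
def gam (R : E3 → (E3 ≃ₗᵢ[ℝ] E3)) (E' E : ℝ) (ω : E3) (s : ℝ) : E3 :=
  R ω (vec3 (Real.sqrt (1 - mu E' E ^ 2) * Real.cos s)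
        (Real.sqrt (1 - mu E' E ^ 2) * Real.sin s) (mu E' E))

/-- The partial derivative `(∂γ/∂E')(E',E,ω)(s)
  = (∂_{E'}μ)·R(ω)( −μcos s/√(1−μ²), −μ sin s/√(1−μ²), 1 )`. -/
def dgamE' (R : E3 → (E3 ≃ₗᵢ[ℝ] E3)) (E' E : ℝ) (ω : E3) (s : ℝ) : E3 :=
  (deriv (fun t => mu t E) E') •
    R ω (vec3 (-(mu E' E) * Real.cos s / Real.sqrt (1 - mu E' E ^ 2))
          (-(mu E' E) * Real.sin s / Real.sqrt (1 - mu E' E ^ 2)) 1)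

/-- `ψ ∈ C(Ḡ, C^m(I, C^n(ℝ³)))`: joint continuity, `m` continuous `E`-derivatives on `I`,
each of which is `Cⁿ` in the spatial variable with jointly continuous spatial derivatives. -/
def MixedReg (m n : ℕ) (GC : Set E3) (I : Set ℝ) (ψ : E3 → E3 → ℝ → ℝ) : Prop :=
  ContinuousOn (fun p : E3 × E3 × ℝ => ψ p.1 p.2.1 p.2.2)
    (GC ×ˢ (Set.univ : Set E3) ×ˢ I) ∧
  (∀ x ∈ GC, ∀ y : E3, ContDiffOn ℝ m (fun E => ψ x y E) I) ∧
  (∀ x ∈ GC, ∀ j : ℕ, j ≤ m → ∀ E ∈ I,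
    ContDiff ℝ n (fun y => iteratedDerivWithin j (fun t => ψ x y t) I E)) ∧
  (∀ x ∈ GC, ∀ j k : ℕ, j ≤ m → k ≤ n →
    ContinuousOn (fun p : E3 × ℝ =>
      iteratedFDeriv ℝ k (fun y => iteratedDerivWithin j (fun t => ψ x y t) I p.2) p.1)
      ((Set.univ : Set E3) ×ˢ I))

/-!
Part (1) is differentiation under the integral sign: on `(E, E_m)` the curve `γ` is smooth in
`E'`, so the derivative of the integrand is jointly continuous and hence locally bounded.

At `E' = E` the circle degenerates to `ω` and `∂γ/∂E'` blows up like `1/σ`, `σ = √(1 - μ²)`.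
Writing `γ - ω = σ (v + τ ω)` with `v` the unit radial direction of the circle, the fundamental
theorem of calculus along the segment `[ω, γ]` gives
`∂f(γ) v = ∂f(ω) v + σ ∫₀¹ ∂²f(ω + r (γ - ω)) (v + τ ω, v) dr`.
The first term integrates to zero over a period because `∫ v ds = 0`, and the second cancels the
`1/σ`. What remains is continuous on `[E, E_m] × [0, 2π]`, which gives the limit `L`. Since `F`
is continuous from the right at `E` and `F'` has a limit there, that limit is the right
derivative.
-/

lemma vec3_eq_smul_add (a b c : ℝ) :
    vec3 a b c = a • vec3 1 0 0 + b • vec3 0 1 0 + c • e₃ := by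
  ext i
  fin_cases i <;> simp [vec3, e₃]

section Mu

variable {E t : ℝ}

lemma mu_pos (hE : 0 < E) (ht : 0 < t) : 0 < mu t E :=
  Real.sqrt_pos.2 (by positivity)

lemma mu_self (hE : 0 < E) : mu E E = 1 := by
  rw [mu, div_self (by positivity), Real.sqrt_one]

lemma mu_le_one (hE : 0 < E) (ht : E ≤ t) : mu t E ≤ 1 := by
  have ht0 : 0 < t := hE.trans_le ht
  refine Real.sqrt_le_one.mpr ((div_le_one (by positivity)).2 ?_)
  nlinarith

lemma mu_lt_one (hE : 0 < E) (ht : E < t) : mu t E < 1 := by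
  have ht0 : 0 < t := hE.trans ht
  refine (Real.sqrt_lt' one_pos).2 ?_
  rw [one_pow, div_lt_one (by positivity)]
  nlinarith

lemma contDiffOn_mu (hE : 0 < E) : ContDiffOn ℝ ⊤ (fun t => mu t E) (Ioi 0) := by
  refine ContDiffOn.sqrt ?_ fun t (ht : 0 < t) => by positivity
  exact (contDiffOn_const.mul (contDiffOn_id.add contDiffOn_const)).div
    (contDiffOn_id.mul contDiffOn_const) fun t (ht : 0 < t) => by positivity

lemma continuousOn_mu (hE : 0 < E) : ContinuousOn (fun t => mu t E) (Ioi 0) :=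
  (contDiffOn_mu hE).continuousOn

lemma continuousOn_deriv_mu (hE : 0 < E) :
    ContinuousOn (deriv fun t => mu t E) (Ioi 0) :=
  (contDiffOn_mu hE).continuousOn_deriv_of_isOpen isOpen_Ioi (by simp)

lemma hasDerivAt_mu (hE : 0 < E) (ht : 0 < t) :
    HasDerivAt (fun u => mu u E) (deriv (fun u => mu u E) t) t :=
  (((contDiffOn_mu hE).differentiableOn (by simp)) t ht).differentiableAt
    (Ioi_mem_nhds ht) |>.hasDerivAt

def sig (E' E : ℝ) : ℝ := Real.sqrt (1 - mu E' E ^ 2)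

lemma one_sub_mu_sq_pos (hE : 0 < E) (ht : E < t) : 0 < 1 - mu t E ^ 2 := by
  have := mu_lt_one hE ht
  have := (mu_pos hE (hE.trans ht)).le
  nlinarith

lemma sig_pos (hE : 0 < E) (ht : E < t) : 0 < sig t E :=
  Real.sqrt_pos.2 (one_sub_mu_sq_pos hE ht)

lemma continuousOn_sig (hE : 0 < E) : ContinuousOn (fun t => sig t E) (Ioi 0) :=
  (continuousOn_const.sub ((continuousOn_mu hE).pow 2)).sqrt

lemma hasDerivAt_sig (hE : 0 < E) (ht : E < t) :
    HasDerivAt (fun u => sig u E) (-(mu t E * deriv (fun u => mu u E) t) / sig t E) t := by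
  have hsq := ((hasDerivAt_mu hE (hE.trans ht)).fun_pow 2).const_sub 1
  unfold sig
  convert hsq.sqrt (one_sub_mu_sq_pos hE ht).ne' using 1
  field_simp
  ring

def tau (E' E : ℝ) : ℝ := -Real.sqrt ((1 - mu E' E) / (1 + mu E' E))

lemma continuousOn_tau (hE : 0 < E) : ContinuousOn (fun t => tau t E) (Ioi 0) := by
  refine ((continuousOn_const.sub (continuousOn_mu hE)).div
    (continuousOn_const.add (continuousOn_mu hE)) fun t ht => ?_).sqrt.neg
  exact ne_of_gt (show 0 < 1 + mu t E by linarith [mu_pos hE ht])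

lemma sig_mul_tau (hE : 0 < E) (ht : E ≤ t) : sig t E * tau t E = mu t E - 1 := by
  have hμ1 := mu_le_one hE ht
  have hμ0 := (mu_pos hE (hE.trans_le ht)).le
  have hsq : (1 - mu t E ^ 2) * ((1 - mu t E) / (1 + mu t E)) = (1 - mu t E) ^ 2 := by
    field_simp
    ring
  rw [sig, tau, mul_neg, ← Real.sqrt_mul (by nlinarith), hsq, Real.sqrt_sq (by linarith)]
  ring

end Mu

section Circle

variable {R : E3 → (E3 ≃ₗᵢ[ℝ] E3)} {ω : E3} {E t : ℝ}

def circleDir (R : E3 → (E3 ≃ₗᵢ[ℝ] E3)) (ω : E3) (s : ℝ) : E3 :=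
  Real.cos s • R ω (vec3 1 0 0) + Real.sin s • R ω (vec3 0 1 0)

lemma continuous_circleDir : Continuous (circleDir R ω) := by
  unfold circleDir
  fun_prop

lemma integral_circleDir : ∫ s in (0:ℝ)..(2 * π), circleDir R ω s = 0 := by
  simp only [circleDir]
  rw [intervalIntegral.integral_add (f := fun s => Real.cos s • R ω (vec3 1 0 0))
    (g := fun s => Real.sin s • R ω (vec3 0 1 0))
    ((Real.continuous_cos.smul continuous_const).intervalIntegrable _ _)
    ((Real.continuous_sin.smul continuous_const).intervalIntegrable _ _),
    intervalIntegral.integral_smul_const, intervalIntegral.integral_smul_const]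
  simp

lemma gam_eq (hRω : R ω e₃ = ω) (t s : ℝ) :
    gam R t E ω s = sig t E • circleDir R ω s + mu t E • ω := by
  rw [gam, vec3_eq_smul_add, circleDir, sig]
  simp only [map_add, map_smul, hRω, smul_add, smul_smul]

lemma gam_self (hE : 0 < E) (hRω : R ω e₃ = ω) (s : ℝ) : gam R E E ω s = ω := by
  simp [gam_eq hRω, sig, mu_self hE]

lemma gam_sub_self (hE : 0 < E) (hRω : R ω e₃ = ω) (ht : E ≤ t) (s : ℝ) :
    gam R t E ω s - ω = sig t E • (circleDir R ω s + tau t E • ω) := by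
  rw [gam_eq hRω, smul_add, smul_smul, sig_mul_tau hE ht, sub_smul, one_smul]
  abel

lemma dgamE'_eq (hRω : R ω e₃ = ω) (t s : ℝ) :
    dgamE' R t E ω s =
      deriv (fun u => mu u E) t • (ω - (mu t E / sig t E) • circleDir R ω s) := by
  rw [dgamE', vec3_eq_smul_add, circleDir, sig]
  simp only [map_add, map_smul, hRω, one_smul]
  module

lemma hasDerivAt_gam (hE : 0 < E) (hRω : R ω e₃ = ω) (ht : E < t) (s : ℝ) :
    HasDerivAt (fun u => gam R u E ω s) (dgamE' R t E ω s) t := by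
  simp only [gam_eq hRω]
  refine (((hasDerivAt_sig hE ht).smul_const (circleDir R ω s)).add
    ((hasDerivAt_mu hE (hE.trans ht)).smul_const ω)).congr_deriv ?_
  rw [dgamE'_eq hRω]
  module

lemma continuousOn_gam (hE : 0 < E) (hRω : R ω e₃ = ω) :
    ContinuousOn (fun p : ℝ × ℝ => gam R p.1 E ω p.2) (Ioi 0 ×ˢ univ) := by
  simp only [gam_eq hRω]
  refine (((continuousOn_sig hE).comp continuousOn_fst fun p hp => hp.1).smul
    (continuous_circleDir.comp continuous_snd).continuousOn).add
    (((continuousOn_mu hE).comp continuousOn_fst fun p hp => hp.1).smul continuousOn_const)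

lemma continuousOn_dgamE' (hE : 0 < E) (hRω : R ω e₃ = ω) :
    ContinuousOn (fun p : ℝ × ℝ => dgamE' R p.1 E ω p.2) (Ioi E ×ˢ univ) := by
  have hfst : MapsTo Prod.fst (Ioi E ×ˢ (univ : Set ℝ)) (Ioi 0) :=
    fun p hp => hE.trans hp.1
  simp only [dgamE'_eq hRω]
  refine ((continuousOn_deriv_mu hE).comp continuousOn_fst hfst).smul
    (continuousOn_const.sub ((((continuousOn_mu hE).comp continuousOn_fst hfst).div
      ((continuousOn_sig hE).comp continuousOn_fst hfst) fun p hp => ?_).smul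
      (continuous_circleDir.comp continuous_snd).continuousOn))
  exact (sig_pos hE hp.1).ne'

end Circle

section ParametricIntegral

variable {F : Type*} [NormedAddCommGroup F] [NormedSpace ℝ F] {a b : ℝ}

lemma continuousOn_intervalIntegral_of_continuousOn {X : Type*} [TopologicalSpace X]
    [FirstCountableTopology X] {K : Set X} (hK : IsCompact K) {f : X → ℝ → F}
    (hf : ContinuousOn f.uncurry (K ×ˢ uIcc a b)) :
    ContinuousOn (fun x => ∫ s in a..b, f x s) K := by
  obtain ⟨M, hM⟩ := (hK.prod isCompact_uIcc).exists_bound_of_continuousOn hf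
  intro x hx
  refine intervalIntegral.continuousWithinAt_of_dominated_interval (bound := fun _ => M)
    ?_ ?_ intervalIntegrable_const ?_
  · filter_upwards [self_mem_nhdsWithin] with y hy
    exact ((hf.uncurry_left y hy).mono uIoc_subset_uIcc).aestronglyMeasurable
      measurableSet_uIoc
  · filter_upwards [self_mem_nhdsWithin] with y hy
    exact ae_of_all _ fun s hs => hM (y, s) ⟨hy, uIoc_subset_uIcc hs⟩
  · exact ae_of_all _ fun s hs => hf.uncurry_right s (uIoc_subset_uIcc hs) x hx

lemma hasDerivAt_intervalIntegral_of_continuousOn {U : Set ℝ} (hU : IsOpen U) {t₀ : ℝ}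
    (ht₀ : t₀ ∈ U) {f f' : ℝ → ℝ → F} (hf : ContinuousOn f.uncurry (U ×ˢ uIcc a b))
    (hf' : ContinuousOn f'.uncurry (U ×ˢ uIcc a b))
    (hderiv : ∀ t ∈ U, ∀ s ∈ uIcc a b, HasDerivAt (f · s) (f' t s) t) :
    HasDerivAt (fun t => ∫ s in a..b, f t s) (∫ s in a..b, f' t₀ s) t₀ := by
  obtain ⟨ε, hε, hball⟩ := nhds_basis_closedBall.mem_iff.1 (hU.mem_nhds ht₀)
  obtain ⟨M, hM⟩ := ((isCompact_closedBall t₀ ε).prod isCompact_uIcc).exists_bound_of_continuousOn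
    (hf'.mono (prod_mono hball subset_rfl))
  refine (intervalIntegral.hasDerivAt_integral_of_dominated_loc_of_deriv_le
    (bound := fun _ => M) (ball_mem_nhds t₀ hε) ?_ ((hf.uncurry_left t₀ ht₀).intervalIntegrable)
    (((hf'.uncurry_left t₀ ht₀).mono uIoc_subset_uIcc).aestronglyMeasurable measurableSet_uIoc)
    ?_ intervalIntegrable_const ?_).2
  · filter_upwards [hU.mem_nhds ht₀] with t ht
    exact ((hf.uncurry_left t ht).mono uIoc_subset_uIcc).aestronglyMeasurable measurableSet_uIoc
  · exact ae_of_all _ fun s hs t ht => hM (t, s) ⟨ball_subset_closedBall ht, uIoc_subset_uIcc hs⟩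
  · exact ae_of_all _ fun s hs t ht =>
      hderiv t (hball (ball_subset_closedBall ht)) s (uIoc_subset_uIcc hs)

end ParametricIntegral

section PartialDerivatives

variable {H : Type*} [NormedAddCommGroup H] [NormedSpace ℝ H]
  {f : H → ℝ → ℝ} {D : H → ℝ → (H →L[ℝ] ℝ)} {y₀ : H} {t₀ : ℝ}

lemma isLittleO_sub_sub_partialFDeriv
    (hD : ∀ᶠ p : H × ℝ in 𝓝 (y₀, t₀), HasFDerivAt (f · p.2) (D p.1 p.2) p.1)
    (hDc : ContinuousAt D.uncurry (y₀, t₀)) :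
    (fun p : (H × H) × ℝ => f p.1.1 p.2 - f p.1.2 p.2 - D y₀ t₀ (p.1.1 - p.1.2))
      =o[𝓝 ((y₀, y₀), t₀)] fun p => p.1.1 - p.1.2 := by
  refine Asymptotics.isLittleO_iff.2 fun c hc => ?_
  have hclose : ∀ᶠ p : H × ℝ in 𝓝 (y₀, t₀),
      HasFDerivAt (f · p.2) (D p.1 p.2) p.1 ∧ ‖D p.1 p.2 - D y₀ t₀‖ ≤ c := by
    filter_upwards [hD, hDc (closedBall_mem_nhds _ hc)] with p h1 h2
    exact ⟨h1, by rwa [← dist_eq_norm]⟩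
  obtain ⟨δ, hδ, hδball⟩ := Metric.eventually_nhds_iff_ball.1 hclose
  have hnear : (ball y₀ δ ×ˢ ball y₀ δ) ×ˢ ball t₀ δ ∈ 𝓝 ((y₀, y₀), t₀) :=
    prod_mem_nhds (prod_mem_nhds (ball_mem_nhds _ hδ) (ball_mem_nhds _ hδ)) (ball_mem_nhds _ hδ)
  filter_upwards [hnear] with p ⟨⟨hp₁, hp₂⟩, hpt⟩
  have hmem : ∀ y ∈ ball y₀ δ, (y, p.2) ∈ ball (y₀, t₀) δ := fun y hy => by
    rw [← ball_prod_same]; exact ⟨hy, hpt⟩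
  exact (convex_ball y₀ δ).norm_image_sub_le_of_norm_hasFDerivWithin_le' (f := (f · p.2))
    (fun y hy => (hδball _ (hmem y hy)).1.hasFDerivWithinAt)
    (fun y hy => (hδball _ (hmem y hy)).2) hp₂ hp₁

lemma HasDerivAt.comp_partial {γ : ℝ → H} {γ' : H} {b : ℝ} (hγ : HasDerivAt γ γ' t₀)
    (hD : ∀ᶠ p : H × ℝ in 𝓝 (γ t₀, t₀), HasFDerivAt (f · p.2) (D p.1 p.2) p.1)
    (hDc : ContinuousAt D.uncurry (γ t₀, t₀)) (hb : HasDerivAt (f (γ t₀)) b t₀) :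
    HasDerivAt (fun t => f (γ t) t) (D (γ t₀) t₀ γ' + b) t₀ := by
  set A := D (γ t₀) t₀
  have hlim : Tendsto (fun t => ((γ t, γ t₀), t)) (𝓝 t₀) (𝓝 ((γ t₀, γ t₀), t₀)) :=
    (hγ.continuousAt.tendsto.prodMk_nhds tendsto_const_nhds).prodMk_nhds tendsto_id
  have hsmall : HasDerivAt (fun t => f (γ t) t - f (γ t₀) t - A (γ t - γ t₀)) 0 t₀ := by
    rw [hasDerivAt_iff_isLittleO]
    refine (((isLittleO_sub_sub_partialFDeriv hD hDc).comp_tendsto hlim).trans_isBigO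
      hγ.isBigO_sub).congr_left fun t => ?_
    simp [A]
  have hlin : HasDerivAt (fun t => A (γ t - γ t₀)) (A γ') t₀ :=
    A.hasFDerivAt.comp_hasDerivAt t₀ (hγ.sub_const _)
  have hsum := (hsmall.add hlin).add hb
  rw [zero_add] at hsum
  refine hsum.congr_of_eventuallyEq (Eventually.of_forall fun t => ?_)
  simp only [Pi.add_apply]
  ring

end PartialDerivatives

section Regularity

variable {H : Type*} [NormedAddCommGroup H] [NormedSpace ℝ H]

lemma fderiv_sub_fderiv_eq_integral_iteratedFDeriv_two {g : H → ℝ} (hg : ContDiff ℝ 2 g)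
    (y z c : H) :
    fderiv ℝ g z c - fderiv ℝ g y c =
      ∫ r in (0:ℝ)..1, iteratedFDeriv ℝ 2 g (y + r • (z - y)) ![z - y, c] := by
  have hline : ∀ r : ℝ, HasDerivAt (fun r => y + r • (z - y)) (z - y) r := fun r => by
    simpa using ((hasDerivAt_id r).smul_const (z - y)).const_add y
  have hderiv : ∀ r : ℝ, HasDerivAt (fun r => fderiv ℝ g (y + r • (z - y)) c)
      (iteratedFDeriv ℝ 2 g (y + r • (z - y)) ![z - y, c]) r := fun r => by
    have hg' := ((hg.fderiv_right (m := 1) le_rfl).differentiable one_ne_zero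
      (y + r • (z - y))).hasFDerivAt
    simpa [iteratedFDeriv_two_apply, Function.comp_def] using
      ((ContinuousLinearMap.apply ℝ ℝ c).hasFDerivAt.comp _ hg').comp_hasDerivAt r (hline r)
  have hcont : Continuous fun r : ℝ => iteratedFDeriv ℝ 2 g (y + r • (z - y)) ![z - y, c] :=
    continuous_eval.comp (((hg.continuous_iteratedFDeriv le_rfl).comp (by fun_prop)).prodMk
      continuous_const)
  rw [intervalIntegral.integral_eq_sub_of_hasDerivAt (fun r _ => hderiv r)
    (hcont.intervalIntegrable _ _)]
  simp

structure PartialC2C1On (f : H → ℝ → ℝ) (I : Set ℝ) : Prop where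
  contDiff : ∀ u ∈ I, ContDiff ℝ 2 (f · u)
  differentiableOn : ∀ y, DifferentiableOn ℝ (f y) I
  continuousOn : ContinuousOn f.uncurry (univ ×ˢ I)
  continuousOn_fderiv : ContinuousOn (fun p : H × ℝ => fderiv ℝ (f · p.2) p.1) (univ ×ˢ I)
  continuousOn_iteratedFDeriv_two :
    ContinuousOn (fun p : H × ℝ => iteratedFDeriv ℝ 2 (f · p.2) p.1) (univ ×ˢ I)
  continuousOn_derivWithin :
    ContinuousOn (fun p : H × ℝ => derivWithin (f p.1) I p.2) (univ ×ˢ I)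

end Regularity

lemma MixedReg.partialC2C1On {m n : ℕ} {GC : Set E3} {I : Set ℝ} {ψ : E3 → E3 → ℝ → ℝ}
    (hψ : MixedReg m n GC I ψ) (hm : 1 ≤ m) (hn : 2 ≤ n) {x : E3} (hx : x ∈ GC) :
    PartialC2C1On (ψ x) I := by
  obtain ⟨-, hE, hy, hj⟩ := hψ
  have h00 := hj x hx 0 0 (Nat.zero_le _) (Nat.zero_le _)
  have h01 := hj x hx 0 1 (Nat.zero_le _) (by omega)
  have h10 := hj x hx 1 0 hm (Nat.zero_le _)
  simp only [iteratedDerivWithin_zero, iteratedDerivWithin_one] at h00 h01 h10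
  refine ⟨fun u hu => ?_, fun y => (hE x hx y).differentiableOn (by positivity), ?_, ?_,
    by simpa using hj x hx 0 2 (Nat.zero_le _) hn, ?_⟩
  · simpa using (hy x hx 0 (Nat.zero_le _) u hu).of_le (by exact_mod_cast hn)
  · refine ((continuousMultilinearCurryFin0 ℝ E3 ℝ).continuous.comp_continuousOn h00).congr ?_
    intro p _
    simp [Function.uncurry]
  · refine ((continuousMultilinearCurryFin1 ℝ E3 ℝ).continuous.comp_continuousOn h01).congr ?_
    intro p _
    ext v
    simp [iteratedFDeriv_one_apply]
  · refine ((continuousMultilinearCurryFin0 ℝ E3 ℝ).continuous.comp_continuousOn h10).congr ?_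
    intro p _
    simp

section CircleIntegrals

variable {f : E3 → ℝ → ℝ} {I J : Set ℝ} {R : E3 → (E3 ≃ₗᵢ[ℝ] E3)} {ω : E3} {E Em t : ℝ}

lemma continuousOn_comp_gam {Z : Type*} [TopologicalSpace Z] {g : E3 → ℝ → Z}
    (hg : ContinuousOn g.uncurry (univ ×ˢ I)) (hE : 0 < E) (hRω : R ω e₃ = ω)
    (hJI : J ⊆ I) (hJ : J ⊆ Ioi 0) :
    ContinuousOn (fun p : ℝ × ℝ => g (gam R p.1 E ω p.2) p.1) (J ×ˢ univ) :=
  hg.comp (((continuousOn_gam hE hRω).mono (prod_mono hJ subset_rfl)).prodMk continuousOn_fst)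
    fun _ hp => ⟨mem_univ _, hJI hp.1⟩

lemma continuousOn_integral_comp_gam {F : Type*} [NormedAddCommGroup F] [NormedSpace ℝ F]
    {g : E3 → ℝ → F} (hg : ContinuousOn g.uncurry (univ ×ˢ I)) (hE : 0 < E)
    (hRω : R ω e₃ = ω) (hEI : Icc E Em ⊆ I) :
    ContinuousOn (fun t => ∫ s in (0:ℝ)..(2 * π), g (gam R t E ω s) t) (Icc E Em) :=
  continuousOn_intervalIntegral_of_continuousOn (f := fun t s => g (gam R t E ω s) t)
    isCompact_Icc ((continuousOn_comp_gam hg hE hRω hEI fun _ ht => hE.trans_le ht.1).mono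
      (prod_mono subset_rfl (subset_univ _)))

lemma PartialC2C1On.tendsto_integral_derivWithin_comp_gam (hf : PartialC2C1On f I) (hE : 0 < E)
    (hRω : R ω e₃ = ω) (hEI : Icc E Em ⊆ I) (hEm : E < Em) :
    Tendsto (fun t => ∫ s in (0:ℝ)..(2 * π), derivWithin (f (gam R t E ω s)) I t)
      (𝓝[>] E) (𝓝 (2 * π * derivWithin (f ω) I E)) := by
  have hcont := continuousOn_integral_comp_gam (g := fun y u => derivWithin (f y) I u)
    hf.continuousOn_derivWithin hE hRω hEI E (left_mem_Icc.2 hEm.le)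
  simpa only [gam_self hE hRω, intervalIntegral.integral_const, smul_eq_mul, sub_zero] using
    (hcont.mono_of_mem_nhdsWithin (Icc_mem_nhdsGT hEm)).tendsto

lemma PartialC2C1On.hasDerivAt_integral_comp_gam (hf : PartialC2C1On f I) (hE : 0 < E)
    (hRω : R ω e₃ = ω) (hEI : Icc E Em ⊆ I) (ht : t ∈ Ioo E Em) :
    HasDerivAt (fun t => ∫ s in (0:ℝ)..(2 * π), f (gam R t E ω s) t)
      ((∫ s in (0:ℝ)..(2 * π), inner ℝ (gradient (f · t) (gam R t E ω s)) (dgamE' R t E ω s))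
        + ∫ s in (0:ℝ)..(2 * π), derivWithin (f (gam R t E ω s)) I t) t := by
  have hUI : Ioo E Em ⊆ I := Ioo_subset_Icc_self.trans hEI
  have hU0 : Ioo E Em ⊆ Ioi 0 := fun _ ht => hE.trans ht.1
  have hInhds : ∀ t ∈ Ioo E Em, I ∈ 𝓝 t := fun t ht =>
    mem_of_superset (isOpen_Ioo.mem_nhds ht) hUI
  have hD : ContinuousOn (fun p : ℝ × ℝ =>
      fderiv ℝ (f · p.1) (gam R p.1 E ω p.2) (dgamE' R p.1 E ω p.2)) (Ioo E Em ×ˢ univ) :=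
    isBoundedBilinearMap_apply.continuous.comp_continuousOn
      ((continuousOn_comp_gam (g := fun y u => fderiv ℝ (f · u) y) hf.continuousOn_fderiv
        hE hRω hUI hU0).prodMk ((continuousOn_dgamE' hE hRω).mono
          (prod_mono (fun _ ht => ht.1) subset_rfl)))
  have hB : ContinuousOn (fun p : ℝ × ℝ => derivWithin (f (gam R p.1 E ω p.2)) I p.1)
      (Ioo E Em ×ˢ univ) :=
    continuousOn_comp_gam (g := fun y u => derivWithin (f y) I u)
      hf.continuousOn_derivWithin hE hRω hUI hU0
  have hslice : ∀ {g : ℝ × ℝ → ℝ}, ContinuousOn g (Ioo E Em ×ˢ univ) →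
      IntervalIntegrable (fun s => g (t, s)) MeasureTheory.volume 0 (2 * π) := fun hg =>
    (hg.comp_continuous (continuous_const.prodMk continuous_id)
      fun s => ⟨ht, mem_univ s⟩).intervalIntegrable _ _
  have key := hasDerivAt_intervalIntegral_of_continuousOn (a := 0) (b := 2 * π)
    (f := fun t s => f (gam R t E ω s) t)
    (f' := fun t s => fderiv ℝ (f · t) (gam R t E ω s) (dgamE' R t E ω s)
      + derivWithin (f (gam R t E ω s)) I t) isOpen_Ioo ht
    ((continuousOn_comp_gam hf.continuousOn hE hRω hUI hU0).mono
      (prod_mono subset_rfl (subset_univ _)))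
    ((hD.add hB).mono (prod_mono subset_rfl (subset_univ _)))
    fun t ht s _ => by
      refine (hasDerivAt_gam hE hRω ht.1 s).comp_partial (D := fun y u => fderiv ℝ (f · u) y) ?_ ?_
        ((hf.differentiableOn _ t (hUI ht)).hasDerivWithinAt.hasDerivAt (hInhds t ht))
      · filter_upwards [continuousAt_snd.preimage_mem_nhds (hInhds t ht)] with p hp
        exact ((hf.contDiff p.2 hp).differentiable (by norm_num) p.1).hasFDerivAt
      · exact hf.continuousOn_fderiv.continuousAt (prod_mem_nhds univ_mem (hInhds t ht))
  rw [intervalIntegral.integral_add (hslice hD) (hslice hB)] at key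
  simpa only [inner_gradient_left] using key

end CircleIntegrals

section GradientTerm

variable {f : E3 → ℝ → ℝ} {I : Set ℝ} {R : E3 → (E3 ≃ₗᵢ[ℝ] E3)} {ω : E3} {E Em t : ℝ}

/-- `⟪∇f(γ), ∂γ/∂E'⟫` minus its singular part `-(∂_{E'}μ)(μ/σ) ∂f(ω)(circleDir R ω s)`. -/
def gradIntegrandReg (f : E3 → ℝ → ℝ) (R : E3 → (E3 ≃ₗᵢ[ℝ] E3)) (E : ℝ) (ω : E3)
    (t s : ℝ) : ℝ :=
  deriv (fun u => mu u E) t * (fderiv ℝ (f · t) (gam R t E ω s) ω - mu t E *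
    ∫ r in (0:ℝ)..1, iteratedFDeriv ℝ 2 (f · t) (ω + r • (gam R t E ω s - ω))
      ![circleDir R ω s + tau t E • ω, circleDir R ω s])

lemma PartialC2C1On.inner_gradient_dgamE' (hf : PartialC2C1On f I) (hE : 0 < E)
    (hRω : R ω e₃ = ω) (htI : t ∈ I) (ht : E < t) (s : ℝ) :
    inner ℝ (gradient (f · t) (gam R t E ω s)) (dgamE' R t E ω s) =
      gradIntegrandReg f R E ω t s -
        deriv (fun u => mu u E) t * (mu t E / sig t E) * fderiv ℝ (f · t) ω (circleDir R ω s) := by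
  have hscale : ∀ p, iteratedFDeriv ℝ 2 (f · t) p ![gam R t E ω s - ω, circleDir R ω s] =
      sig t E * iteratedFDeriv ℝ 2 (f · t) p ![circleDir R ω s + tau t E • ω, circleDir R ω s] :=
    fun p => by simp [gam_sub_self hE hRω ht.le, iteratedFDeriv_two_apply]; ring
  have hFTC := fderiv_sub_fderiv_eq_integral_iteratedFDeriv_two (hf.contDiff t htI) ω
    (gam R t E ω s) (circleDir R ω s)
  simp only [hscale, intervalIntegral.integral_const_mul] at hFTC
  have hσ := (sig_pos hE ht).ne'
  rw [inner_gradient_left, dgamE'_eq hRω, gradIntegrandReg]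
  simp only [map_smul, map_sub, smul_eq_mul]
  field_simp
  linear_combination (-(deriv (fun u => mu u E) t * mu t E)) * hFTC

lemma PartialC2C1On.continuousOn_gradIntegrandReg (hf : PartialC2C1On f I) (hE : 0 < E)
    (hRω : R ω e₃ = ω) (hEI : Icc E Em ⊆ I) :
    ContinuousOn (gradIntegrandReg f R E ω).uncurry (Icc E Em ×ˢ uIcc 0 (2 * π)) := by
  set K := Icc E Em ×ˢ uIcc 0 (2 * π)
  have hK0 : MapsTo Prod.fst K (Ioi 0) := fun p hp => hE.trans_le hp.1.1
  have hγ : ContinuousOn (fun p : ℝ × ℝ => gam R p.1 E ω p.2) K :=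
    (continuousOn_gam hE hRω).mono (prod_mono (fun _ ht => hE.trans_le ht.1) (subset_univ _))
  have hD1 := (continuousOn_comp_gam (g := fun y u => fderiv ℝ (f · u) y)
    hf.continuousOn_fderiv hE hRω hEI fun _ ht => hE.trans_le ht.1).mono
      (prod_mono subset_rfl (subset_univ (uIcc 0 (2 * π))))
  have hγ' : ContinuousOn (fun q : (ℝ × ℝ) × ℝ => gam R q.1.1 E ω q.1.2) (K ×ˢ uIcc 0 1) :=
    hγ.comp continuousOn_fst fun _ hq => hq.1
  have hpt : ContinuousOn (fun q : (ℝ × ℝ) × ℝ => ω + q.2 • (gam R q.1.1 E ω q.1.2 - ω))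
      (K ×ˢ uIcc 0 1) :=
    continuousOn_const.add (continuousOn_snd.smul (hγ'.sub continuousOn_const))
  have hD2 := hf.continuousOn_iteratedFDeriv_two.comp (hpt.prodMk (continuousOn_fst.comp
    continuousOn_fst fun _ hq => hq.1)) fun _ hq => ⟨mem_univ _, hEI hq.1.1⟩
  have hdir : ContinuousOn (fun q : (ℝ × ℝ) × ℝ =>
      ![circleDir R ω q.1.2 + tau q.1.1 E • ω, circleDir R ω q.1.2]) (K ×ˢ uIcc 0 1) := by
    refine continuousOn_pi.2 fun i => ?_
    fin_cases i
    · exact (continuous_circleDir.comp (continuous_snd.comp continuous_fst)).continuousOn.add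
        (((continuousOn_tau hE).comp (continuousOn_fst.comp continuousOn_fst fun _ hq => hq.1)
          fun _ hq => hK0 hq.1).smul continuousOn_const)
    · exact (continuous_circleDir.comp (continuous_snd.comp continuous_fst)).continuousOn
  have hQ : ContinuousOn (fun p : ℝ × ℝ => ∫ r in (0:ℝ)..1,
      iteratedFDeriv ℝ 2 (f · p.1) (ω + r • (gam R p.1 E ω p.2 - ω))
        ![circleDir R ω p.2 + tau p.1 E • ω, circleDir R ω p.2]) K :=
    continuousOn_intervalIntegral_of_continuousOn (isCompact_Icc.prod isCompact_uIcc)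
      (continuous_eval.comp_continuousOn (hD2.prodMk hdir))
  exact ((continuousOn_deriv_mu hE).comp continuousOn_fst hK0).mul
    ((hD1.clm_apply continuousOn_const).sub
      (((continuousOn_mu hE).comp continuousOn_fst hK0).mul hQ))

lemma PartialC2C1On.integral_inner_gradient_dgamE' (hf : PartialC2C1On f I) (hE : 0 < E)
    (hRω : R ω e₃ = ω) (hEI : Icc E Em ⊆ I) (ht : t ∈ Ioc E Em) :
    ∫ s in (0:ℝ)..(2 * π), inner ℝ (gradient (f · t) (gam R t E ω s)) (dgamE' R t E ω s) =
      ∫ s in (0:ℝ)..(2 * π), gradIntegrandReg f R E ω t s := by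
  have htI : t ∈ Icc E Em := Ioc_subset_Icc_self ht
  simp only [hf.inner_gradient_dgamE' hE hRω (hEI htI) ht.1]
  set c := deriv (fun u => mu u E) t * (mu t E / sig t E)
  have hsing : ∫ s in (0:ℝ)..(2 * π), c * fderiv ℝ (f · t) ω (circleDir R ω s) = 0 := by
    rw [intervalIntegral.integral_const_mul, (fderiv ℝ (f · t) ω).intervalIntegral_comp_comm
      (continuous_circleDir.intervalIntegrable _ _), integral_circleDir, map_zero, mul_zero]
  have hsingInt : IntervalIntegrable (fun s => c * fderiv ℝ (f · t) ω (circleDir R ω s))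
      MeasureTheory.volume 0 (2 * π) :=
    (continuous_const.mul ((fderiv ℝ (f · t) ω).continuous.comp
      continuous_circleDir)).intervalIntegrable _ _
  rw [intervalIntegral.integral_sub
    (((hf.continuousOn_gradIntegrandReg hE hRω hEI).uncurry_left t htI).intervalIntegrable)
    hsingInt, hsing, sub_zero]

lemma PartialC2C1On.tendsto_integral_inner_gradient_dgamE' (hf : PartialC2C1On f I)
    (hE : 0 < E) (hRω : R ω e₃ = ω) (hEI : Icc E Em ⊆ I) (hEm : E < Em) :
    Tendsto (fun t => ∫ s in (0:ℝ)..(2 * π),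
        inner ℝ (gradient (f · t) (gam R t E ω s)) (dgamE' R t E ω s))
      (𝓝[>] E) (𝓝 (∫ s in (0:ℝ)..(2 * π), gradIntegrandReg f R E ω E s)) := by
  have hcont := continuousOn_intervalIntegral_of_continuousOn isCompact_Icc
    (hf.continuousOn_gradIntegrandReg hE hRω hEI) E (left_mem_Icc.2 hEm.le)
  refine ((hcont.mono_of_mem_nhdsWithin (Icc_mem_nhdsGT hEm)).tendsto).congr' ?_
  filter_upwards [Ioc_mem_nhdsGT hEm] with t ht
  exact (hf.integral_inner_gradient_dgamE' hE hRω hEI ht).symm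

end GradientTerm

theorem stmt9_general (G : Set E3)
    (E₀ Em : ℝ) (hE₀ : 0 < E₀)
    (ψ : E3 → E3 → ℝ → ℝ)
    (hψ : MixedReg 2 3 (closure G) (Set.Icc E₀ Em) ψ)
    (R : E3 → (E3 ≃ₗᵢ[ℝ] E3)) (hR : ∀ ω : E3, ‖ω‖ = 1 → R ω e₃ = ω)
    (x : E3) (hx : x ∈ closure G) (ω : E3) (hω : ‖ω‖ = 1)
    (E : ℝ) (hE : E ∈ Set.Ico E₀ Em) :
    (∀ E' ∈ Set.Ioo E Em,
      HasDerivAt (fun t => ∫ s in (0:ℝ)..(2 * π), ψ x (gam R t E ω s) t)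
        ((∫ s in (0:ℝ)..(2 * π),
            (inner ℝ (gradient (fun y => ψ x y E') (gam R E' E ω s)) (dgamE' R E' E ω s) : ℝ))
          + ∫ s in (0:ℝ)..(2 * π),
              derivWithin (fun u => ψ x (gam R E' E ω s) u) (Set.Icc E₀ Em) E') E') ∧
    ∃ L : ℝ,
      Tendsto (fun E' => ∫ s in (0:ℝ)..(2 * π),
          (inner ℝ (gradient (fun y => ψ x y E') (gam R E' E ω s)) (dgamE' R E' E ω s) : ℝ))
        (𝓝[>] E) (𝓝 L) ∧
      HasDerivWithinAt (fun t => ∫ s in (0:ℝ)..(2 * π), ψ x (gam R t E ω s) t)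
        (2 * π * derivWithin (fun u => ψ x ω u) (Set.Icc E₀ Em) E + L) (Set.Ici E) E := by
  have hE0 : 0 < E := hE₀.trans_le hE.1
  have hRω : R ω e₃ = ω := hR ω hω
  have hEI : Icc E Em ⊆ Icc E₀ Em := Icc_subset_Icc_left hE.1
  have hf : PartialC2C1On (ψ x) (Icc E₀ Em) := hψ.partialC2C1On (by norm_num) (by norm_num) hx
  have hderiv := fun E' (hE' : E' ∈ Ioo E Em) => hf.hasDerivAt_integral_comp_gam hE0 hRω hEI hE'
  have hgrad := hf.tendsto_integral_inner_gradient_dgamE' hE0 hRω hEI hE.2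
  refine ⟨hderiv, _, hgrad, hasDerivWithinAt_Ici_of_tendsto_deriv (s := Ioo E Em)
    (fun t ht => (hderiv t ht).differentiableAt.differentiableWithinAt)
    ((continuousOn_integral_comp_gam hf.continuousOn hE0 hRω hEI E
      (left_mem_Icc.2 hE.2.le)).mono Ioo_subset_Icc_self) (Ioo_mem_nhdsGT hE.2) ?_⟩
  rw [add_comm]
  refine (hgrad.add (hf.tendsto_integral_derivWithin_comp_gam hE0 hRω hEI hE.2)).congr' ?_
  filter_upwards [Ioo_mem_nhdsGT hE.2] with t ht
  exact (hderiv t ht).deriv.symm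

/-- for `ψ ∈ C(Ḡ, C²(I, C³(ℝ³)))`, `x ∈ Ḡ`, `ω ∈ S`, `E ∈ [E₀,E_m)`, the
function `F(E') = ∫_0^{2π} ψ(x, γ(E',E,ω)(s), E') ds` is differentiable on `(E,E_m)` with
`F'(E') = ∫_0^{2π} ⟨∇_yψ(x,γ(E',E,ω)(s),E'), ∂γ/∂E'⟩ ds + ∫_0^{2π} ∂ψ/∂E(x,γ(...),E') ds`,
the gradient term has a limit `L` as `E' → E⁺`, and `F` has right derivative
`2π·(∂ψ/∂E)(x,ω,E) + L` at `E`. -/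
theorem stmt9 (G : Set E3) (hGopen : IsOpen G) (hGbdd : Bornology.IsBounded G)
    (E₀ Em : ℝ) (hE₀ : 0 < E₀) (hI : E₀ < Em)
    (ψ : E3 → E3 → ℝ → ℝ)
    (hψ : MixedReg 2 3 (closure G) (Set.Icc E₀ Em) ψ)
    (R : E3 → (E3 ≃ₗᵢ[ℝ] E3)) (hR : ∀ ω : E3, ‖ω‖ = 1 → R ω e₃ = ω)
    (x : E3) (hx : x ∈ closure G) (ω : E3) (hω : ‖ω‖ = 1)
    (E : ℝ) (hE : E ∈ Set.Ico E₀ Em) :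
    (∀ E' ∈ Set.Ioo E Em,
      HasDerivAt (fun t => ∫ s in (0:ℝ)..(2 * π), ψ x (gam R t E ω s) t)
        ((∫ s in (0:ℝ)..(2 * π),
            (inner ℝ (gradient (fun y => ψ x y E') (gam R E' E ω s)) (dgamE' R E' E ω s) : ℝ))
          + ∫ s in (0:ℝ)..(2 * π),
              derivWithin (fun u => ψ x (gam R E' E ω s) u) (Set.Icc E₀ Em) E') E') ∧
    ∃ L : ℝ,
      Tendsto (fun E' => ∫ s in (0:ℝ)..(2 * π),
          (inner ℝ (gradient (fun y => ψ x y E') (gam R E' E ω s)) (dgamE' R E' E ω s) : ℝ))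
        (𝓝[>] E) (𝓝 L) ∧
      HasDerivWithinAt (fun t => ∫ s in (0:ℝ)..(2 * π), ψ x (gam R t E ω s) t)
        (2 * π * derivWithin (fun u => ψ x ω u) (Set.Icc E₀ Em) E + L) (Set.Ici E) E :=
  stmt9_general G E₀ Em hE₀ ψ hψ R hR x hx ω hω E hE
end
end

section
/- Let E₀ > 0, α ∈ (0,1], and let ψ : Ḡ×S×I → ℝ be continuous and α-Hölder in (ω,E) uniformly in x, with norm ‖ψ‖ := sup|ψ| + sup_{x} sup_{(ω₁,E₁)≠(ω₂,E₂)} |ψ(x,ω₁,E₁)−ψ(x,ω₂,E₂)|/(‖ω₁−ω₂‖+|E₁−E₂|)^α. Define h₁(x,ω,E',E) := ∫_0^{2π} ψ(x, γ(E',E,ω)(s), E') ds. Then there exists a constant C₁, independent of ψ, such that for all x ∈ Ḡ, ω ∈ S and E₀ ≤ E ≤ E' ≤ E_m: |h₁(x,ω,E',E) − h₁(x,ω,E,E)| ≤ C₁·‖ψ‖·(E'−E)^{α/2} (note h₁(x,ω,E,E) = 2π·ψ(x,ω,E)). -/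
open MeasureTheory Filter Set Metric
open scoped Topology Real

noncomputable section

lemma vec3_apply (a b c : ℝ) (i : Fin 3) : vec3 a b c i = ![a,b,c] i := rfl

lemma norm_vec3 (a b c : ℝ) : ‖vec3 a b c‖ = Real.sqrt (a^2 + b^2 + c^2) := by
  rw [EuclideanSpace.norm_eq]
  simp [vec3_apply, Fin.sum_univ_three, sq_abs]

lemma e3_eq : e₃ = vec3 0 0 1 := by
  ext i
  fin_cases i <;> simp [e₃, vec3_apply, EuclideanSpace.single_apply]

lemma vec3_sub (a b c a' b' c' : ℝ) :
    vec3 a b c - vec3 a' b' c' = vec3 (a-a') (b-b') (c-c') := by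
  ext i; fin_cases i <;> simp [vec3_apply]

lemma continuous_vec3 (f g h : ℝ → ℝ) (hf : Continuous f) (hg : Continuous g)
    (hh : Continuous h) : Continuous fun s => vec3 (f s) (g s) (h s) := by
  apply ((EuclideanSpace.equiv (Fin 3) ℝ).symm).continuous.comp
  apply continuous_pi
  intro i
  fin_cases i <;> simpa

set_option maxHeartbeats 1000000 in
/-- there is a constant `C₁`, independent of `ψ`, such that for every
continuous `ψ`, bounded by `M` and `α`-Hölder in `(ω,E)` with constant `H`
(so `‖ψ‖ ≤ M + H`), the circle average
`h₁(x,ω,E',E) = ∫_0^{2π} ψ(x,γ(E',E,ω)(s),E') ds` obeys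
`|h₁(x,ω,E',E) − 2π·ψ(x,ω,E)| ≤ C₁·(M+H)·(E'−E)^{α/2}` for `E₀ ≤ E ≤ E' ≤ E_m`. -/
theorem stmt12 (G : Set E3) (hGopen : IsOpen G) (hGbdd : Bornology.IsBounded G)
    (E₀ Em α : ℝ) (hE₀ : 0 < E₀) (hI : E₀ < Em) (hα : 0 < α) (hα1 : α ≤ 1)
    (R : E3 → (E3 ≃ₗᵢ[ℝ] E3)) (hR : ∀ ω : E3, ‖ω‖ = 1 → R ω e₃ = ω) :
    ∃ C₁ : ℝ, ∀ (ψ : E3 → E3 → ℝ → ℝ) (M H : ℝ),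
      ContinuousOn (fun p : E3 × E3 × ℝ => ψ p.1 p.2.1 p.2.2)
        (closure G ×ˢ sphere (0 : E3) 1 ×ˢ Set.Icc E₀ Em) →
      (∀ x ∈ closure G, ∀ ω ∈ sphere (0 : E3) 1, ∀ E ∈ Set.Icc E₀ Em, |ψ x ω E| ≤ M) →
      (∀ x ∈ closure G, ∀ ω₁ ∈ sphere (0 : E3) 1, ∀ E₁ ∈ Set.Icc E₀ Em,
        ∀ ω₂ ∈ sphere (0 : E3) 1, ∀ E₂ ∈ Set.Icc E₀ Em,
        |ψ x ω₁ E₁ - ψ x ω₂ E₂| ≤ H * (‖ω₁ - ω₂‖ + |E₁ - E₂|) ^ α) →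
      ∀ x ∈ closure G, ∀ ω ∈ sphere (0 : E3) 1, ∀ E E' : ℝ,
        E₀ ≤ E → E ≤ E' → E' ≤ Em →
        |(∫ s in (0:ℝ)..(2 * π), ψ x (gam R E' E ω s) E') - 2 * π * ψ x ω E|
          ≤ C₁ * (M + H) * (E' - E) ^ (α / 2) := by
  set K : ℝ := 2 / (E₀ * (E₀ + 2)) with hK
  have hKpos : 0 < K := by positivity
  set c : ℝ := Real.sqrt (2 * K) + Real.sqrt Em with hc
  have hcpos : 0 < c := by
    have : 0 < Real.sqrt (2 * K) := Real.sqrt_pos.2 (by positivity)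
    have h2 : 0 ≤ Real.sqrt Em := Real.sqrt_nonneg _
    linarith
  refine ⟨2 * π * c ^ α, ?_⟩
  intro ψ M H hcont hM hH x hx ω hω E E' hE0 hEE' hEm
  have hπ : (0:ℝ) < π := Real.pi_pos
  set t : ℝ := E' - E with htdef
  have ht : 0 ≤ t := by linarith
  have hωn : ‖ω‖ = 1 := by simpa using hω
  have hEpos : 0 < E := lt_of_lt_of_le hE₀ hE0
  have hE'pos : 0 < E' := lt_of_lt_of_le hEpos hEE'
  have hEIcc : E ∈ Set.Icc E₀ Em := ⟨hE0, by linarith⟩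
  have hE'Icc : E' ∈ Set.Icc E₀ Em := ⟨by linarith, hEm⟩
  -- basic facts about μ
  set μ : ℝ := mu E' E with hμdef
  have hqpos : 0 < E * (E' + 2) / (E' * (E + 2)) := by positivity
  have hq1 : E * (E' + 2) / (E' * (E + 2)) ≤ 1 := by
    rw [div_le_one (by positivity)]; nlinarith
  have hμsq : μ ^ 2 = E * (E' + 2) / (E' * (E + 2)) := Real.sq_sqrt hqpos.le
  have hμ0 : 0 ≤ μ := Real.sqrt_nonneg _
  have hμ1 : μ ≤ 1 := Real.sqrt_le_one.2 hq1
  have h1μsq : 0 ≤ 1 - μ ^ 2 := by nlinarith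
  set A : ℝ := Real.sqrt (1 - μ ^ 2) with hA
  have hA2 : A ^ 2 = 1 - μ ^ 2 := Real.sq_sqrt h1μsq
  -- 1 - μ² ≤ K t
  have h1 : 1 - μ ^ 2 = 2 * t / (E' * (E + 2)) := by
    rw [hμsq]; field_simp; ring
  have h2 : 1 - μ ^ 2 ≤ K * t := by
    have hKt : K * t = 2 * t / (E₀ * (E₀ + 2)) := by rw [hK]; ring
    rw [h1, hKt]
    gcongr <;> nlinarith
  -- the key norm bounds
  have hrepr : ∀ s : ℝ, gam R E' E ω s
      = R ω (vec3 (A * Real.cos s) (A * Real.sin s) μ) := fun s => rfl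
  have hsphere : ∀ s : ℝ, gam R E' E ω s ∈ sphere (0:E3) 1 := by
    intro s
    have : ‖gam R E' E ω s‖ = 1 := by
      rw [hrepr s, (R ω).norm_map, norm_vec3]
      have hc2 : (A * Real.cos s) ^ 2 + (A * Real.sin s) ^ 2 + μ ^ 2 = 1 := by
        have := Real.sin_sq_add_cos_sq s; nlinarith
      rw [hc2, Real.sqrt_one]
    simpa [mem_sphere_iff_norm] using this
  have hdist : ∀ s : ℝ, ‖gam R E' E ω s - ω‖ ≤ Real.sqrt (2 * K) * Real.sqrt t := by
    intro s
    have hgam : gam R E' E ω s - ω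
        = R ω (vec3 (A * Real.cos s) (A * Real.sin s) μ - e₃) := by
      rw [hrepr s, (R ω).map_sub, hR ω hωn]
    rw [hgam, (R ω).norm_map, e3_eq, vec3_sub]
    rw [norm_vec3]
    have hval : (A * Real.cos s - 0) ^ 2 + (A * Real.sin s - 0) ^ 2 + (μ - 1) ^ 2
        = 2 - 2 * μ := by
      have := Real.sin_sq_add_cos_sq s; nlinarith
    rw [hval, ← Real.sqrt_mul (by positivity) t]
    apply Real.sqrt_le_sqrt
    nlinarith
  -- nonnegativity of H and M
  have hH0 : 0 ≤ H := by
    have h := hH x hx ω hω E₀ ⟨le_refl _, hI.le⟩ ω hω Em ⟨hI.le, le_refl _⟩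
    have hle := le_trans (abs_nonneg _) h
    have hpos : (0:ℝ) < (‖ω - ω‖ + |E₀ - Em|) ^ α := by
      apply Real.rpow_pos_of_pos
      rw [sub_self, norm_zero, zero_add]
      exact abs_pos.2 (sub_ne_zero.2 (ne_of_lt hI))
    nlinarith [hle, hpos]
  have hM0 : 0 ≤ M := le_trans (abs_nonneg _) (hM x hx ω hω E hEIcc)
  -- pointwise bound
  have hpt : ∀ s : ℝ, |ψ x (gam R E' E ω s) E' - ψ x ω E|
      ≤ H * (c ^ α * t ^ (α / 2)) := by
    intro s
    have h := hH x hx (gam R E' E ω s) (hsphere s) E' hE'Icc ω hω E hEIcc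
    refine h.trans ?_
    have hsum : ‖gam R E' E ω s - ω‖ + |E' - E| ≤ c * Real.sqrt t := by
      have h1 := hdist s
      have h2 : |E' - E| = t := abs_of_nonneg ht
      have h3 : t ≤ Real.sqrt Em * Real.sqrt t := by
        have h4 : Real.sqrt t ≤ Real.sqrt Em := Real.sqrt_le_sqrt (by linarith)
        nlinarith [Real.sqrt_nonneg t, Real.mul_self_sqrt ht, h4]
      rw [hc]; nlinarith [Real.sqrt_nonneg t]
    have hmono : (‖gam R E' E ω s - ω‖ + |E' - E|) ^ α ≤ (c * Real.sqrt t) ^ α :=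
      Real.rpow_le_rpow (by positivity) hsum hα.le
    have heq : (c * Real.sqrt t) ^ α = c ^ α * t ^ (α / 2) := by
      rw [Real.mul_rpow hcpos.le (Real.sqrt_nonneg t), Real.sqrt_eq_rpow,
        ← Real.rpow_mul ht]
      congr 1
      ring
    rw [← heq]
    exact mul_le_mul_of_nonneg_left hmono hH0
  -- integrability
  have hcg : Continuous (gam R E' E ω) := by
    apply (R ω).continuous.comp
    exact continuous_vec3 _ _ _ (continuous_const.mul Real.continuous_cos)
      (continuous_const.mul Real.continuous_sin) continuous_const
  have hcψ : Continuous fun s => ψ x (gam R E' E ω s) E' := by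
    show Continuous ((fun p : E3 × E3 × ℝ => ψ p.1 p.2.1 p.2.2)
      ∘ fun s => (x, gam R E' E ω s, E'))
    exact hcont.comp_continuous
      (continuous_const.prodMk (hcg.prodMk continuous_const))
      (fun s => ⟨hx, hsphere s, hE'Icc⟩)
  have hInt : IntervalIntegrable (fun s => ψ x (gam R E' E ω s) E')
      MeasureTheory.volume 0 (2 * π) := hcψ.intervalIntegrable _ _
  -- conclude
  have hconst : 2 * π * ψ x ω E = ∫ s in (0:ℝ)..(2 * π), ψ x ω E := by
    rw [intervalIntegral.integral_const, smul_eq_mul, sub_zero]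
  rw [hconst, ← intervalIntegral.integral_sub hInt (intervalIntegrable_const)]
  have hbound : ‖∫ s in (0:ℝ)..(2 * π), (ψ x (gam R E' E ω s) E' - ψ x ω E)‖
      ≤ H * (c ^ α * t ^ (α / 2)) * |2 * π - 0| := by
    apply intervalIntegral.norm_integral_le_of_norm_le_const
    intro s _
    rw [Real.norm_eq_abs]
    exact hpt s
  rw [← Real.norm_eq_abs]
  refine hbound.trans ?_
  have habs : |2 * π - 0| = 2 * π := by
    rw [sub_zero, abs_of_pos (by positivity)]
  rw [habs]
  have htnn : 0 ≤ t ^ (α / 2) := Real.rpow_nonneg ht _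
  have hcα : 0 ≤ c ^ α := Real.rpow_nonneg hcpos.le _
  have : H ≤ M + H := by linarith
  nlinarith [mul_nonneg (mul_nonneg hcα htnn) hM0, mul_nonneg htnn hM0,
    mul_nonneg hcα htnn]
end
end
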